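/- arXiv:2603.08634 — 10 statements merged into one kernel-verified Lean document; each statement's English description precedes it below -/
import Mathlib

section
/- Let A_i, A_j, A_h, A_k, ε_{ij}, ε_{hk}, ε_{ik}, ε_{jh}, δ_{ij}, δ_{hk}, δ_{ik}, δ_{jh}, and c be real numbers. For each pair (a,b) set v_{ab} := A_a + A_b + ε_{ab} and Y_{ab} := 1 if v_{ab} ≤ δ_{ab} and Y_{ab} := 0 otherwise. Then (1 − Y_{ij}) · (1 − Y_{hk}) · Y_{ik} · Y_{jh} · 1{δ_{ij} + δ_{hk} − δ_{ik} − δ_{jh} > c} ≤ 1{ε_{ij} + ε_{hk} − ε_{ik} − ε_{jh} > c}. -/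
/-!
On the flipped tetrad event the two absent links have `v > δ` and the two present links have
`v ≤ δ`, so `v_ij + v_hk - v_ik - v_jh > δ_ij + δ_hk - δ_ik - δ_jh`. In this tetrad sum every fixed
effect appears once with each sign, so the left side equals `ε_ij + ε_hk - ε_ik - ε_jh`.
-/

section Indicator

variable {α : Type*} {p q : Prop} [Decidable p] [Decidable q]

lemma one_sub_ite_one_zero [AddGroupWithOne α] :
    (1 - if p then 1 else 0 : α) = if ¬p then 1 else 0 := by
  split_ifs <;> simp

lemma ite_one_zero_le_ite_one_zero [Zero α] [One α] [Preorder α] [ZeroLEOneClass α]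
    (h : p → q) : (if p then 1 else 0 : α) ≤ if q then 1 else 0 := by
  split_ifs with hp hq
  · exact le_rfl
  · exact absurd (h hp) hq
  · exact zero_le_one
  · exact le_rfl

end Indicator

lemma tetrad_sum_lt_of_flipped {δij δhk δik δjh vij vhk vik vjh : ℝ}
    (hij : δij < vij) (hhk : δhk < vhk) (hik : vik ≤ δik) (hjh : vjh ≤ δjh) :
    δij + δhk - δik - δjh < vij + vhk - vik - vjh := by
  linarith

lemma tetrad_sum_fixed_effects_cancel (Ai Aj Ah Ak εij εhk εik εjh : ℝ) :
    (Ai + Aj + εij) + (Ah + Ak + εhk) - (Ai + Ak + εik) - (Aj + Ah + εjh)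
      = εij + εhk - εik - εjh := by
  ring

/-- Flipped pointwise tetrad bound: the flipped tetrad event
`Y_ij = Y_hk = 0, Y_ik = Y_jh = 1` intersected with `{Δδ > c}` implies
`{Δε > c}`, stated as an inequality between (products of) indicators. -/
theorem tetrad_pointwise_bound_flipped
    (Ai Aj Ah Ak εij εhk εik εjh δij δhk δik δjh c : ℝ)
    (vij vhk vik vjh : ℝ)
    (hvij : vij = Ai + Aj + εij) (hvhk : vhk = Ah + Ak + εhk)
    (hvik : vik = Ai + Ak + εik) (hvjh : vjh = Aj + Ah + εjh)
    (Yij Yhk Yik Yjh : ℝ)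
    (hYij : Yij = if vij ≤ δij then (1 : ℝ) else 0)
    (hYhk : Yhk = if vhk ≤ δhk then (1 : ℝ) else 0)
    (hYik : Yik = if vik ≤ δik then (1 : ℝ) else 0)
    (hYjh : Yjh = if vjh ≤ δjh then (1 : ℝ) else 0) :
    (1 - Yij) * (1 - Yhk) * Yik * Yjh *
        (if c < δij + δhk - δik - δjh then (1 : ℝ) else 0)
      ≤ (if c < εij + εhk - εik - εjh then (1 : ℝ) else 0) := by
  subst hYij hYhk hYik hYjh
  simp only [one_sub_ite_one_zero, ite_zero_mul_ite_zero, mul_one]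
  apply ite_one_zero_le_ite_one_zero
  rintro ⟨⟨⟨⟨hij, hhk⟩, hik⟩, hjh⟩, hc⟩
  have hv := tetrad_sum_lt_of_flipped (not_le.mp hij) (not_le.mp hhk) hik hjh
  rw [hvij, hvhk, hvik, hvjh, tetrad_sum_fixed_effects_cancel] at hv
  exact hc.trans hv
end

section
/- Let (Ω, F, P) be a probability space, let Z be a random variable taking values in a measurable space, and let ε_{ij}, ε_{hk}, ε_{ik}, ε_{jh} be real random variables such that the random vector (ε_{ij}, ε_{hk}, ε_{ik}, ε_{jh}) is independent of the σ-algebra σ(Z) generated by Z. Let A_i, A_j, A_h, A_k and δ_{ij}, δ_{hk}, δ_{ik}, δ_{jh} be arbitrary real random variables (the δ's may depend on the shocks and fixed effects, accommodating endogenous covariates), and define Y_{ab} := 1{A_a + A_b + ε_{ab} ≤ δ_{ab}}. Then for every c ∈ ℝ, almost surely, E[ Y_{ij} Y_{hk} (1 − Y_{ik}) (1 − Y_{jh}) · 1{δ_{ij} + δ_{hk} − δ_{ik} − δ_{jh} ≤ c} | σ(Z) ] ≤ P(ε_{ij} + ε_{hk} − ε_{ik} − ε_{jh} ≤ c). -/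
/-!
On the tetrad event `Y_ij Y_hk (1 - Y_ik) (1 - Y_jh) = 1` the four link conditions give
`ε_ij ≤ δ_ij - A_i - A_j`, `ε_hk ≤ δ_hk - A_h - A_k`, `ε_ik > δ_ik - A_i - A_k` and
`ε_jh > δ_jh - A_j - A_h`; in the tetrad combination the fixed effects cancel, so
`Δε ≤ Δδ`, and hence `{Δδ ≤ c}` forces `{Δε ≤ c}`. The integrand is therefore dominated by
`1{Δε ≤ c}`, a function of the shock vector, whose conditional expectation given `σ(Z)` is
its unconditional mean `P(Δε ≤ c)` by independence.
-/

open MeasureTheory ProbabilityTheory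

section CondExp

variable {Ω β γ : Type*} [MeasurableSpace Ω] {P : Measure Ω} [IsFiniteMeasure P]
  [MeasurableSpace β] [MeasurableSpace γ] {X : Ω → γ} {Z : Ω → β} {s : Set γ}

theorem condExp_indicator_preimage_of_indepFun (hX : Measurable X) (hZ : Measurable Z)
    (hind : IndepFun X Z P) (hs : MeasurableSet s) :
    P[(X ⁻¹' s).indicator 1 | MeasurableSpace.comap Z inferInstance]
      =ᵐ[P] fun _ => P.real (X ⁻¹' s) := by
  have hmeas : StronglyMeasurable[MeasurableSpace.comap X inferInstance]
      ((X ⁻¹' s).indicator (1 : Ω → ℝ)) :=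
    stronglyMeasurable_const.indicator ⟨s, hs, rfl⟩
  rw [← integral_indicator_one (hX hs)]
  exact condExp_indep_eq hX.comap_le hZ.comap_le hmeas hind

theorem condExp_le_measureReal_of_le_indicator_preimage {f : Ω → ℝ} (hf : Integrable f P)
    (hX : Measurable X) (hZ : Measurable Z) (hind : IndepFun X Z P) (hs : MeasurableSet s)
    (hfs : ∀ᵐ ω ∂P, f ω ≤ (X ⁻¹' s).indicator 1 ω) :
    P[f | MeasurableSpace.comap Z inferInstance] ≤ᵐ[P] fun _ => P.real (X ⁻¹' s) := by
  have hmono := condExp_mono (m := MeasurableSpace.comap Z inferInstance) hf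
    ((integrable_const (1 : ℝ)).indicator (hX hs)) hfs
  filter_upwards [hmono, condExp_indicator_preimage_of_indepFun hX hZ hind hs] with ω h1 h2
  exact h1.trans h2.le

end CondExp

@[fun_prop]
theorem measurable_ite_le_one_zero {Ω : Type*} [MeasurableSpace Ω] {u v : Ω → ℝ}
    (hu : Measurable u) (hv : Measurable v) :
    Measurable fun ω => if u ω ≤ v ω then (1 : ℝ) else 0 :=
  Measurable.ite (measurableSet_le hu hv) measurable_const measurable_const

theorem tetrad_indicator_le (ai aj ah ak εij εhk εik εjh δij δhk δik δjh c : ℝ) :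
    (if ai + aj + εij ≤ δij then (1 : ℝ) else 0) * (if ah + ak + εhk ≤ δhk then 1 else 0) *
        (1 - if ai + ak + εik ≤ δik then 1 else 0) * (1 - if aj + ah + εjh ≤ δjh then 1 else 0) *
        (if δij + δhk - δik - δjh ≤ c then 1 else 0)
      ≤ if εij + εhk - εik - εjh ≤ c then 1 else 0 := by
  split_ifs <;> norm_num
  linarith

/-- Conditional lower-bound tetrad restriction (bound_L): the conditional
expectation given `σ(Z)` of the tetrad-event indicator intersected with
`{Δδ ≤ c}` is a.s. bounded by the unconditional probability `P(Δε ≤ c)`,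
provided the shock vector is independent of `Z`. -/
theorem tetrad_condexp_lower_bound
    {Ω : Type*} [MeasurableSpace Ω] (P : Measure Ω) [IsProbabilityMeasure P]
    {β : Type*} [MeasurableSpace β] (Z : Ω → β) (hZ : Measurable Z)
    (εij εhk εik εjh : Ω → ℝ)
    (hεij : Measurable εij) (hεhk : Measurable εhk)
    (hεik : Measurable εik) (hεjh : Measurable εjh)
    (hindep : IndepFun (fun ω => (εij ω, εhk ω, εik ω, εjh ω)) Z P)
    (Ai Aj Ah Ak δij δhk δik δjh : Ω → ℝ)
    (hAi : Measurable Ai) (hAj : Measurable Aj)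
    (hAh : Measurable Ah) (hAk : Measurable Ak)
    (hδij : Measurable δij) (hδhk : Measurable δhk)
    (hδik : Measurable δik) (hδjh : Measurable δjh)
    (Yij Yhk Yik Yjh : Ω → ℝ)
    (hYij : Yij = fun ω => if Ai ω + Aj ω + εij ω ≤ δij ω then (1 : ℝ) else 0)
    (hYhk : Yhk = fun ω => if Ah ω + Ak ω + εhk ω ≤ δhk ω then (1 : ℝ) else 0)
    (hYik : Yik = fun ω => if Ai ω + Ak ω + εik ω ≤ δik ω then (1 : ℝ) else 0)
    (hYjh : Yjh = fun ω => if Aj ω + Ah ω + εjh ω ≤ δjh ω then (1 : ℝ) else 0)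
    (c : ℝ) :
    ∀ᵐ ω ∂P,
      (P[fun ω => Yij ω * Yhk ω * (1 - Yik ω) * (1 - Yjh ω) *
            (if δij ω + δhk ω - δik ω - δjh ω ≤ c then (1 : ℝ) else 0)
          | MeasurableSpace.comap Z inferInstance]) ω
        ≤ (P {ω | εij ω + εhk ω - εik ω - εjh ω ≤ c}).toReal := by
  set X : Ω → ℝ × ℝ × ℝ × ℝ := fun ω => (εij ω, εhk ω, εik ω, εjh ω)
  set S : Set (ℝ × ℝ × ℝ × ℝ) := {x | x.1 + x.2.1 - x.2.2.1 - x.2.2.2 ≤ c}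
  set f : Ω → ℝ := fun ω => Yij ω * Yhk ω * (1 - Yik ω) * (1 - Yjh ω) *
    (if δij ω + δhk ω - δik ω - δjh ω ≤ c then (1 : ℝ) else 0)
  have hdom : ∀ ω, f ω ≤ (X ⁻¹' S).indicator 1 ω := fun ω => calc
    f ω ≤ if εij ω + εhk ω - εik ω - εjh ω ≤ c then 1 else 0 := by
      simpa only [f, hYij, hYhk, hYik, hYjh] using tetrad_indicator_le (Ai ω) (Aj ω) (Ah ω) (Ak ω)
        (εij ω) (εhk ω) (εik ω) (εjh ω) (δij ω) (δhk ω) (δik ω) (δjh ω) c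
    _ = (X ⁻¹' S).indicator 1 ω := by simp [Set.indicator_apply, X, S]
  have hf : Measurable f := by
    subst hYij hYhk hYik hYjh
    fun_prop
  have hint : Integrable f P := by
    refine Integrable.of_bound hf.aestronglyMeasurable 1 (ae_of_all _ fun ω => ?_)
    simp only [f, hYij, hYhk, hYik, hYjh, Real.norm_eq_abs]
    split_ifs <;> norm_num
  have hX : Measurable X := by fun_prop
  have hS : MeasurableSet S := measurableSet_le (by fun_prop) measurable_const
  exact condExp_le_measureReal_of_le_indicator_preimage hint hX hZ hindep hS (ae_of_all _ hdom)
end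

section
/- Let (Ω, F, P) be a probability space, let Z be a random variable taking values in a measurable space, and let ε_{ij}, ε_{hk}, ε_{ik}, ε_{jh} be real random variables such that the random vector (ε_{ij}, ε_{hk}, ε_{ik}, ε_{jh}) is independent of σ(Z). Let A_i, A_j, A_h, A_k and δ_{ij}, δ_{hk}, δ_{ik}, δ_{jh} be arbitrary real random variables, and define Y_{ab} := 1{A_a + A_b + ε_{ab} ≤ δ_{ab}} and Δδ := δ_{ij} + δ_{hk} − δ_{ik} − δ_{jh}. Then for every c ∈ ℝ and any two events G, G' ∈ σ(Z) with P(G) > 0 and P(G') > 0: P( Y_{ij} = Y_{hk} = 1, Y_{ik} = Y_{jh} = 0, Δδ ≤ c | G ) ≤ 1 − P( Y_{ij} = Y_{hk} = 0, Y_{ik} = Y_{jh} = 1, Δδ > c | G' ). -/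
/-!
Conditioning on an event `G ∈ σ(Z)` does not change the law of the shocks, so both conditional
probabilities are controlled by the unconditional CDF `F(c) = P(Δε ≤ c)` of the tetrad shock
difference `Δε = ε_ij + ε_hk - ε_ik - ε_jh`. On the first tetrad event the fixed effects cancel in
`Δε < Δδ ≤ c`, and on the flipped one `c < Δδ < Δε`; hence the first probability is at most `F(c)`
and the second at most `1 - F(c)`.
-/

open MeasureTheory ProbabilityTheory

namespace ProbabilityTheory

variable {Ω α β : Type*} [MeasurableSpace Ω] [MeasurableSpace α] [MeasurableSpace β]
  {P : Measure Ω} {X : Ω → α} {Z : Ω → β}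

theorem IndepFun.cond_preimage_le (hindep : IndepFun X Z P) (hX : Measurable X) {G : Set Ω}
    (hG : MeasurableSet[MeasurableSpace.comap Z inferInstance] G) {u : Set α}
    (hu : MeasurableSet u) : P[X ⁻¹' u | G] ≤ P (X ⁻¹' u) := by
  obtain ⟨t, ht, rfl⟩ := hG
  calc P[X ⁻¹' u | Z ⁻¹' t] = (P (Z ⁻¹' t))⁻¹ * P (Z ⁻¹' t) * P (X ⁻¹' u) := by
        rw [cond_apply' (hX hu), Set.inter_comm, hindep.measure_inter_preimage_eq_mul u t hu ht,
          mul_comm (P (X ⁻¹' u)), mul_assoc]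
    _ ≤ 1 * P (X ⁻¹' u) := by gcongr; exact ENNReal.inv_mul_le_one _
    _ = P (X ⁻¹' u) := one_mul _

theorem IndepFun.cond_le_one_sub_cond [IsProbabilityMeasure P] (hindep : IndepFun X Z P)
    (hX : Measurable X) {G G' : Set Ω}
    (hG : MeasurableSet[MeasurableSpace.comap Z inferInstance] G)
    (hG' : MeasurableSet[MeasurableSpace.comap Z inferInstance] G') {u : Set α}
    (hu : MeasurableSet u) {A B : Set Ω} (hA : A ⊆ X ⁻¹' u) (hB : B ⊆ X ⁻¹' uᶜ) :
    P[A | G] ≤ 1 - P[B | G'] :=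
  calc P[A | G] ≤ P[X ⁻¹' u | G] := measure_mono hA
    _ ≤ P (X ⁻¹' u) := hindep.cond_preimage_le hX hG hu
    _ = 1 - P (X ⁻¹' uᶜ) := by
        rw [Set.preimage_compl, prob_compl_eq_one_sub (hX hu),
          ENNReal.sub_sub_cancel ENNReal.one_ne_top prob_le_one]
    _ ≤ 1 - P[X ⁻¹' uᶜ | G'] := tsub_le_tsub_left (hindep.cond_preimage_le hX hG' hu.compl) 1
    _ ≤ 1 - P[B | G'] := tsub_le_tsub_left (measure_mono hB) 1

end ProbabilityTheory

section

variable {M : Type*} [Zero M] [One M] [NeZero (1 : M)] {p : Prop} [Decidable p]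

theorem ite_one_zero_eq_one_iff : (if p then (1 : M) else 0) = 1 ↔ p := by
  simp

theorem ite_one_zero_eq_zero_iff : (if p then (1 : M) else 0) = 0 ↔ ¬p := by
  simp

end

theorem tetrad_shock_lt {ai aj ah ak eij ehk eik ejh dij dhk dik djh : ℝ}
    (hij : ai + aj + eij ≤ dij) (hhk : ah + ak + ehk ≤ dhk)
    (hik : ¬ai + ak + eik ≤ dik) (hjh : ¬aj + ah + ejh ≤ djh) :
    eij + ehk - eik - ejh < dij + dhk - dik - djh := by
  linarith [not_le.mp hik, not_le.mp hjh]

theorem flipped_tetrad_lt_shock {ai aj ah ak eij ehk eik ejh dij dhk dik djh : ℝ}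
    (hij : ¬ai + aj + eij ≤ dij) (hhk : ¬ah + ak + ehk ≤ dhk)
    (hik : ai + ak + eik ≤ dik) (hjh : aj + ah + ejh ≤ djh) :
    dij + dhk - dik - djh < eij + ehk - eik - ejh := by
  linarith [not_le.mp hij, not_le.mp hhk]

theorem tetrad_nonparametric_sandwich_general
    {Ω : Type*} [MeasurableSpace Ω] (P : Measure Ω) [IsProbabilityMeasure P]
    {β : Type*} [MeasurableSpace β] (Z : Ω → β)
    (εij εhk εik εjh : Ω → ℝ)
    (hεij : Measurable εij) (hεhk : Measurable εhk)
    (hεik : Measurable εik) (hεjh : Measurable εjh)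
    (hindep : IndepFun (fun ω => (εij ω, εhk ω, εik ω, εjh ω)) Z P)
    (Ai Aj Ah Ak δij δhk δik δjh : Ω → ℝ)
    (Yij Yhk Yik Yjh : Ω → ℝ)
    (hYij : Yij = fun ω => if Ai ω + Aj ω + εij ω ≤ δij ω then (1 : ℝ) else 0)
    (hYhk : Yhk = fun ω => if Ah ω + Ak ω + εhk ω ≤ δhk ω then (1 : ℝ) else 0)
    (hYik : Yik = fun ω => if Ai ω + Ak ω + εik ω ≤ δik ω then (1 : ℝ) else 0)
    (hYjh : Yjh = fun ω => if Aj ω + Ah ω + εjh ω ≤ δjh ω then (1 : ℝ) else 0)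
    (c : ℝ) (G G' : Set Ω)
    (hG : MeasurableSet[MeasurableSpace.comap Z inferInstance] G)
    (hG' : MeasurableSet[MeasurableSpace.comap Z inferInstance] G') :
    P[{ω | Yij ω = 1 ∧ Yhk ω = 1 ∧ Yik ω = 0 ∧ Yjh ω = 0 ∧
          δij ω + δhk ω - δik ω - δjh ω ≤ c} | G]
      ≤ 1 - P[{ω | Yij ω = 0 ∧ Yhk ω = 0 ∧ Yik ω = 1 ∧ Yjh ω = 1 ∧
          c < δij ω + δhk ω - δik ω - δjh ω} | G'] := by
  subst hYij hYhk hYik hYjh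
  have hX : Measurable fun ω => (εij ω, εhk ω, εik ω, εjh ω) := by fun_prop
  have hu : MeasurableSet {e : ℝ × ℝ × ℝ × ℝ | e.1 + e.2.1 - e.2.2.1 - e.2.2.2 ≤ c} :=
    measurableSet_le (by fun_prop) measurable_const
  refine hindep.cond_le_one_sub_cond hX hG hG' hu ?_ ?_
  · rintro ω ⟨hij, hhk, hik, hjh, hc⟩
    exact (tetrad_shock_lt (ite_one_zero_eq_one_iff.mp hij) (ite_one_zero_eq_one_iff.mp hhk)
      (ite_one_zero_eq_zero_iff.mp hik) (ite_one_zero_eq_zero_iff.mp hjh)).le.trans hc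
  · rintro ω ⟨hij, hhk, hik, hjh, hc⟩
    exact not_le.mpr <| hc.trans <| flipped_tetrad_lt_shock (ite_one_zero_eq_zero_iff.mp hij)
      (ite_one_zero_eq_zero_iff.mp hhk) (ite_one_zero_eq_one_iff.mp hik)
      (ite_one_zero_eq_one_iff.mp hjh)

/-- Tetrad restriction with nonparametric shock distribution (Theorem 1):
for any two positive-probability events `G, G'` in `σ(Z)`, the conditional
probability of the tetrad event intersected with `{Δδ ≤ c}` given `G` is
bounded by one minus the conditional probability of the flipped tetrad event
intersected with `{Δδ > c}` given `G'`. -/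
theorem tetrad_nonparametric_sandwich
    {Ω : Type*} [MeasurableSpace Ω] (P : Measure Ω) [IsProbabilityMeasure P]
    {β : Type*} [MeasurableSpace β] (Z : Ω → β) (hZ : Measurable Z)
    (εij εhk εik εjh : Ω → ℝ)
    (hεij : Measurable εij) (hεhk : Measurable εhk)
    (hεik : Measurable εik) (hεjh : Measurable εjh)
    (hindep : IndepFun (fun ω => (εij ω, εhk ω, εik ω, εjh ω)) Z P)
    (Ai Aj Ah Ak δij δhk δik δjh : Ω → ℝ)
    (hAi : Measurable Ai) (hAj : Measurable Aj)
    (hAh : Measurable Ah) (hAk : Measurable Ak)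
    (hδij : Measurable δij) (hδhk : Measurable δhk)
    (hδik : Measurable δik) (hδjh : Measurable δjh)
    (Yij Yhk Yik Yjh : Ω → ℝ)
    (hYij : Yij = fun ω => if Ai ω + Aj ω + εij ω ≤ δij ω then (1 : ℝ) else 0)
    (hYhk : Yhk = fun ω => if Ah ω + Ak ω + εhk ω ≤ δhk ω then (1 : ℝ) else 0)
    (hYik : Yik = fun ω => if Ai ω + Ak ω + εik ω ≤ δik ω then (1 : ℝ) else 0)
    (hYjh : Yjh = fun ω => if Aj ω + Ah ω + εjh ω ≤ δjh ω then (1 : ℝ) else 0)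
    (c : ℝ) (G G' : Set Ω)
    (hG : MeasurableSet[MeasurableSpace.comap Z inferInstance] G)
    (hG' : MeasurableSet[MeasurableSpace.comap Z inferInstance] G')
    (hGpos : 0 < P G) (hG'pos : 0 < P G') :
    P[{ω | Yij ω = 1 ∧ Yhk ω = 1 ∧ Yik ω = 0 ∧ Yjh ω = 0 ∧
          δij ω + δhk ω - δik ω - δjh ω ≤ c} | G]
      ≤ 1 - P[{ω | Yij ω = 0 ∧ Yhk ω = 0 ∧ Yik ω = 1 ∧ Yjh ω = 1 ∧
          c < δij ω + δhk ω - δik ω - δjh ω} | G'] :=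
  tetrad_nonparametric_sandwich_general P Z εij εhk εik εjh hεij hεhk hεik hεjh hindep Ai Aj Ah Ak
    δij δhk δik δjh Yij Yhk Yik Yjh hYij hYhk hYik hYjh c G G' hG hG'
end

section
/- Let (Ω, F, P) be a probability space, let Z be a random variable taking values in a measurable space, and let ε_{ij}, ε_{hk}, ε_{ik}, ε_{jh} be real random variables such that the random vector (ε_{ij}, ε_{hk}, ε_{ik}, ε_{jh}) is independent of σ(Z). Let A_i, A_j, A_h, A_k and δ_{ij}, δ_{hk}, δ_{ik}, δ_{jh} be arbitrary real random variables, define Y_{ab} := 1{A_a + A_b + ε_{ab} ≤ δ_{ab}}, Δδ := δ_{ij} + δ_{hk} − δ_{ik} − δ_{jh}, and F_Δ(c) := P(ε_{ij} + ε_{hk} − ε_{ik} − ε_{jh} ≤ c). Then for every c ∈ ℝ and every event G ∈ σ(Z) with P(G) > 0: P( Y_{ij} = Y_{hk} = 1, Y_{ik} = Y_{jh} = 0, Δδ ≤ c | G ) ≤ F_Δ(c) and F_Δ(c) ≤ 1 − P( Y_{ij} = Y_{hk} = 0, Y_{ik} = Y_{jh} = 1, Δδ > c | G ). -/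
/-!
In the link pattern `Y_ij = Y_hk = 1`, `Y_ik = Y_jh = 0` the four fixed effects cancel from the
difference of the latent indices, which forces `Δε < Δδ`; in the flipped pattern it forces
`Δδ < Δε`. So the first event with `Δδ ≤ c` lies in `{Δε ≤ c}` and the second with `c < Δδ` in
`{c < Δε}`. Since the shocks are independent of `Z`, conditioning on `G ∈ σ(Z)` does not change
the probabilities of these two events, which are `F_Δ(c)` and `1 - F_Δ(c)`.
-/

open MeasureTheory ProbabilityTheory Set

theorem ProbabilityTheory.IndepFun.cond_preimage_eq
    {Ω α β : Type*} [MeasurableSpace Ω] [MeasurableSpace α] [MeasurableSpace β]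
    {μ : Measure Ω} [IsFiniteMeasure μ] {X : Ω → α} {Z : Ω → β}
    (h : IndepFun X Z μ) (hX : Measurable X) {M : Set α} (hM : MeasurableSet M)
    {G : Set Ω} (hG : MeasurableSet[MeasurableSpace.comap Z inferInstance] G) (hG₀ : μ G ≠ 0) :
    μ[X ⁻¹' M | G] = μ (X ⁻¹' M) := by
  obtain ⟨B, hB, rfl⟩ := hG
  rw [cond_apply' (hX hM), inter_comm, h.measure_inter_preimage_eq_mul _ _ hM hB, mul_comm,
    mul_assoc, ENNReal.mul_inv_cancel hG₀ (measure_ne_top _ _), mul_one]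

section Tetrad

variable {Ω : Type*} {Ai Aj Ah Ak εij εhk εik εjh δij δhk δik δjh Yij Yhk Yik Yjh : Ω → ℝ}

theorem tetrad_event_subset
    (hYij : Yij = fun ω => if Ai ω + Aj ω + εij ω ≤ δij ω then (1 : ℝ) else 0)
    (hYhk : Yhk = fun ω => if Ah ω + Ak ω + εhk ω ≤ δhk ω then (1 : ℝ) else 0)
    (hYik : Yik = fun ω => if Ai ω + Ak ω + εik ω ≤ δik ω then (1 : ℝ) else 0)
    (hYjh : Yjh = fun ω => if Aj ω + Ah ω + εjh ω ≤ δjh ω then (1 : ℝ) else 0) (c : ℝ) :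
    {ω | Yij ω = 1 ∧ Yhk ω = 1 ∧ Yik ω = 0 ∧ Yjh ω = 0 ∧ δij ω + δhk ω - δik ω - δjh ω ≤ c} ⊆
      {ω | εij ω + εhk ω - εik ω - εjh ω ≤ c} := by
  subst hYij hYhk hYik hYjh
  rintro ω ⟨hij, hhk, hik, hjh, hc⟩
  simp only [ite_eq_left_iff, ite_eq_right_iff, zero_ne_one, one_ne_zero, imp_false,
    not_le] at hij hhk hik hjh
  show _ ≤ c
  linarith

theorem flipped_tetrad_event_subset
    (hYij : Yij = fun ω => if Ai ω + Aj ω + εij ω ≤ δij ω then (1 : ℝ) else 0)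
    (hYhk : Yhk = fun ω => if Ah ω + Ak ω + εhk ω ≤ δhk ω then (1 : ℝ) else 0)
    (hYik : Yik = fun ω => if Ai ω + Ak ω + εik ω ≤ δik ω then (1 : ℝ) else 0)
    (hYjh : Yjh = fun ω => if Aj ω + Ah ω + εjh ω ≤ δjh ω then (1 : ℝ) else 0) (c : ℝ) :
    {ω | Yij ω = 0 ∧ Yhk ω = 0 ∧ Yik ω = 1 ∧ Yjh ω = 1 ∧ c < δij ω + δhk ω - δik ω - δjh ω} ⊆
      {ω | εij ω + εhk ω - εik ω - εjh ω ≤ c}ᶜ := by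
  subst hYij hYhk hYik hYjh
  rintro ω ⟨hij, hhk, hik, hjh, hc⟩
  simp only [ite_eq_left_iff, ite_eq_right_iff, zero_ne_one, one_ne_zero, imp_false,
    not_le] at hij hhk hik hjh
  intro hle
  linarith [show εij ω + εhk ω - εik ω - εjh ω ≤ c from hle]

end Tetrad
theorem tetrad_parametric_bounds_general
    {Ω : Type*} [MeasurableSpace Ω] (P : Measure Ω) [IsProbabilityMeasure P]
    {β : Type*} [MeasurableSpace β] (Z : Ω → β)
    (εij εhk εik εjh : Ω → ℝ)
    (hεij : Measurable εij) (hεhk : Measurable εhk)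
    (hεik : Measurable εik) (hεjh : Measurable εjh)
    (hindep : IndepFun (fun ω => (εij ω, εhk ω, εik ω, εjh ω)) Z P)
    (Ai Aj Ah Ak δij δhk δik δjh : Ω → ℝ)
    (Yij Yhk Yik Yjh : Ω → ℝ)
    (hYij : Yij = fun ω => if Ai ω + Aj ω + εij ω ≤ δij ω then (1 : ℝ) else 0)
    (hYhk : Yhk = fun ω => if Ah ω + Ak ω + εhk ω ≤ δhk ω then (1 : ℝ) else 0)
    (hYik : Yik = fun ω => if Ai ω + Ak ω + εik ω ≤ δik ω then (1 : ℝ) else 0)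
    (hYjh : Yjh = fun ω => if Aj ω + Ah ω + εjh ω ≤ δjh ω then (1 : ℝ) else 0)
    (c : ℝ) (G : Set Ω)
    (hG : MeasurableSet[MeasurableSpace.comap Z inferInstance] G)
    (hGpos : 0 < P G) :
    P[{ω | Yij ω = 1 ∧ Yhk ω = 1 ∧ Yik ω = 0 ∧ Yjh ω = 0 ∧
          δij ω + δhk ω - δik ω - δjh ω ≤ c} | G]
        ≤ P {ω | εij ω + εhk ω - εik ω - εjh ω ≤ c} ∧
    P {ω | εij ω + εhk ω - εik ω - εjh ω ≤ c}
        ≤ 1 - P[{ω | Yij ω = 0 ∧ Yhk ω = 0 ∧ Yik ω = 1 ∧ Yjh ω = 1 ∧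
              c < δij ω + δhk ω - δik ω - δjh ω} | G] := by
  set Δε : Ω → ℝ := fun ω => εij ω + εhk ω - εik ω - εjh ω
  have hΔε : Measurable Δε := by fun_prop
  have hΔε_indep : IndepFun Δε Z P :=
    hindep.comp (φ := fun e : ℝ × ℝ × ℝ × ℝ => e.1 + e.2.1 - e.2.2.1 - e.2.2.2)
      (by fun_prop) measurable_id
  have hF : MeasurableSet (Δε ⁻¹' Iic c) := hΔε measurableSet_Iic
  have hcond : P[Δε ⁻¹' Iic c | G] = P (Δε ⁻¹' Iic c) :=
    hΔε_indep.cond_preimage_eq hΔε measurableSet_Iic hG hGpos.ne'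
  have hcond_compl : P[(Δε ⁻¹' Iic c)ᶜ | G] = P (Δε ⁻¹' Iic c)ᶜ :=
    hΔε_indep.cond_preimage_eq hΔε measurableSet_Iic.compl hG hGpos.ne'
  constructor
  · exact (measure_mono (tetrad_event_subset hYij hYhk hYik hYjh c)).trans_eq hcond
  · have hflip := (measure_mono (flipped_tetrad_event_subset hYij hYhk hYik hYjh c)).trans_eq
      hcond_compl
    calc P (Δε ⁻¹' Iic c) = 1 - P (Δε ⁻¹' Iic c)ᶜ := by
          rw [prob_compl_eq_one_sub hF, ENNReal.sub_sub_cancel ENNReal.one_ne_top prob_le_one]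
      _ ≤ _ := tsub_le_tsub_left hflip 1

/-- Tetrad restriction with parametric shock distribution (Theorem 2):
when the CDF `F_Δ(c) = P(Δε ≤ c)` of the differenced shock is known, both
one-sided bounds hold: for any positive-probability event `G` in `σ(Z)`,
the conditional probability of the tetrad event with `{Δδ ≤ c}` is below
`F_Δ(c)`, and `F_Δ(c)` is below one minus the conditional probability of the
flipped event with `{Δδ > c}`. -/
theorem tetrad_parametric_bounds
    {Ω : Type*} [MeasurableSpace Ω] (P : Measure Ω) [IsProbabilityMeasure P]
    {β : Type*} [MeasurableSpace β] (Z : Ω → β) (hZ : Measurable Z)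
    (εij εhk εik εjh : Ω → ℝ)
    (hεij : Measurable εij) (hεhk : Measurable εhk)
    (hεik : Measurable εik) (hεjh : Measurable εjh)
    (hindep : IndepFun (fun ω => (εij ω, εhk ω, εik ω, εjh ω)) Z P)
    (Ai Aj Ah Ak δij δhk δik δjh : Ω → ℝ)
    (hAi : Measurable Ai) (hAj : Measurable Aj)
    (hAh : Measurable Ah) (hAk : Measurable Ak)
    (hδij : Measurable δij) (hδhk : Measurable δhk)
    (hδik : Measurable δik) (hδjh : Measurable δjh)
    (Yij Yhk Yik Yjh : Ω → ℝ)
    (hYij : Yij = fun ω => if Ai ω + Aj ω + εij ω ≤ δij ω then (1 : ℝ) else 0)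
    (hYhk : Yhk = fun ω => if Ah ω + Ak ω + εhk ω ≤ δhk ω then (1 : ℝ) else 0)
    (hYik : Yik = fun ω => if Ai ω + Ak ω + εik ω ≤ δik ω then (1 : ℝ) else 0)
    (hYjh : Yjh = fun ω => if Aj ω + Ah ω + εjh ω ≤ δjh ω then (1 : ℝ) else 0)
    (c : ℝ) (G : Set Ω)
    (hG : MeasurableSet[MeasurableSpace.comap Z inferInstance] G)
    (hGpos : 0 < P G) :
    P[{ω | Yij ω = 1 ∧ Yhk ω = 1 ∧ Yik ω = 0 ∧ Yjh ω = 0 ∧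
          δij ω + δhk ω - δik ω - δjh ω ≤ c} | G]
        ≤ P {ω | εij ω + εhk ω - εik ω - εjh ω ≤ c} ∧
    P {ω | εij ω + εhk ω - εik ω - εjh ω ≤ c}
        ≤ 1 - P[{ω | Yij ω = 0 ∧ Yhk ω = 0 ∧ Yik ω = 1 ∧ Yjh ω = 1 ∧
              c < δij ω + δhk ω - δik ω - δjh ω} | G] :=
  tetrad_parametric_bounds_general P Z εij εhk εik εjh hεij hεhk hεik hεjh hindep Ai Aj Ah Ak δij
    δhk δik δjh Yij Yhk Yik Yjh hYij hYhk hYik hYjh c G hG hGpos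
end

section
/- Let (Ω, F, P) be a probability space. Let (Z_i, A_i), (Z_j, A_j), (Z_k, A_k) be independent and identically distributed random pairs, where each Z takes values in a countable measurable space and each A is real-valued. Let ε_{ij}, ε_{ik}, ε_{jk} be real random variables such that (ε_{ij}, ε_{ik}, ε_{jk}) is independent of ((Z_i, A_i), (Z_j, A_j), (Z_k, A_k)). Let δ_{ij}, δ_{ik}, δ_{jk} be arbitrary real random variables, define Y_{ab} := 1{A_a + A_b + ε_{ab} ≤ δ_{ab}} and u := 2A_i + ε_{ij} + ε_{ik} − ε_{jk}. Then for every c ∈ ℝ and all values z_i, z_j, z_k with P(Z_i = z_i, Z_j = z_j, Z_k = z_k) > 0: (i) P(u ≤ c | Z_i = z_i, Z_j = z_j, Z_k = z_k) = P(u ≤ c | Z_i = z_i) =: G_3(c | z_i); (ii) P( Y_{ij} Y_{ik} (1 − Y_{jk}) = 1 and δ_{ij} + δ_{ik} − δ_{jk} ≤ c | Z_i = z_i, Z_j = z_j, Z_k = z_k ) ≤ G_3(c | z_i); and (iii) P( (1 − Y_{ij})(1 − Y_{ik}) Y_{jk} = 1 and δ_{ij} + δ_{ik} − δ_{jk} >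 c | Z_i = z_i, Z_j = z_j, Z_k = z_k ) ≤ 1 − G_3(c | z_i). -/
open MeasureTheory ProbabilityTheory

/-! The residual `u` is a function of the shocks and of agent `i`'s pair `(Z_i, A_i)`, and these
are jointly independent of `(Z_j, Z_k)`; so conditioning on `Z_i` and on `(Z_j, Z_k)` gives the
same law of `u` as conditioning on `Z_i` alone, which is (i). On the triad event
`Y_ij = Y_ik = 1, Y_jk = 0`, adding the two link inequalities and subtracting the reversed third
one gives `u < δ_ij + δ_ik − δ_jk`, so the event with `Δδ ≤ c` lies in `{u ≤ c}`; symmetrically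
the flipped event with `Δδ > c` lies in `{u > c}`. Bounds (ii) and (iii) follow from (i). -/

namespace ProbabilityTheory

variable {Ω α β γ : Type*} [MeasurableSpace Ω] [MeasurableSpace α] [MeasurableSpace β]
  [MeasurableSpace γ] {μ : Measure Ω} [IsFiniteMeasure μ]

theorem IndepFun.prodMk_left_of_prodMk_right {X : Ω → α} {Y : Ω → β} {Z : Ω → γ}
    (hX : Measurable X) (hY : Measurable Y) (hZ : Measurable Z)
    (hX_YZ : IndepFun X (fun ω => (Y ω, Z ω)) μ) (hYZ : IndepFun Y Z μ) :
    IndepFun (fun ω => (X ω, Y ω)) Z μ := by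
  have hXY : IndepFun X Y μ := hX_YZ.comp measurable_id measurable_fst
  rw [indepFun_iff_map_prod_eq_prod_map_map (hX.prodMk hY).aemeasurable hZ.aemeasurable]
  rw [indepFun_iff_map_prod_eq_prod_map_map hX.aemeasurable
    (hY.prodMk hZ).aemeasurable] at hX_YZ
  rw [indepFun_iff_map_prod_eq_prod_map_map hY.aemeasurable hZ.aemeasurable] at hYZ
  rw [indepFun_iff_map_prod_eq_prod_map_map hX.aemeasurable hY.aemeasurable] at hXY
  have hmap : μ.map (fun ω => ((X ω, Y ω), Z ω))
      = (μ.map (fun ω => (X ω, (Y ω, Z ω)))).map MeasurableEquiv.prodAssoc.symm := by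
    rw [Measure.map_map MeasurableEquiv.prodAssoc.symm.measurable (hX.prodMk (hY.prodMk hZ))]
    rfl
  rw [hmap, hX_YZ, hYZ, hXY, ← Measure.prodAssoc_prod, MeasurableEquiv.map_symm_map]

theorem IndepFun.cond_preimage_inter_eq {U : Ω → α} {V : Ω → β} {W : Ω → γ}
    (h : IndepFun (fun ω => (U ω, V ω)) W μ) (hV : Measurable V) (hW : Measurable W)
    {A : Set α} {B : Set β} {C : Set γ}
    (hA : MeasurableSet A) (hB : MeasurableSet B) (hC : MeasurableSet C)
    (hBC : μ (V ⁻¹' B ∩ W ⁻¹' C) ≠ 0) :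
    μ[U ⁻¹' A | V ⁻¹' B ∩ W ⁻¹' C] = μ[U ⁻¹' A | V ⁻¹' B] := by
  have hVW : IndepFun V W μ := h.comp measurable_snd measurable_id
  have hUV : V ⁻¹' B ∩ U ⁻¹' A = (fun ω => (U ω, V ω)) ⁻¹' (A ×ˢ B) := by
    ext ω; simp [and_comm]
  have hC0 : μ (W ⁻¹' C) ≠ 0 := fun h0 => hBC (measure_mono_null Set.inter_subset_right h0)
  rw [cond_apply (hV hB |>.inter (hW hC)), cond_apply (hV hB), Set.inter_right_comm, hUV,
    h.measure_inter_preimage_eq_mul _ _ (hA.prod hB) hC,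
    hVW.measure_inter_preimage_eq_mul _ _ hB hC,
    ENNReal.mul_inv (.inr (measure_ne_top _ _)) (.inl (measure_ne_top _ _)), mul_mul_mul_comm,
    ENNReal.inv_mul_cancel hC0 (measure_ne_top _ _), mul_one]

theorem indepFun_shocks_first_pair_other_labels {δ : Type*} [MeasurableSpace δ]
    {E : Ω → δ} {Zi Zj Zk : Ω → β} {Ai Aj Ak : Ω → γ} (hE : Measurable E)
    (hZi : Measurable Zi) (hZj : Measurable Zj) (hZk : Measurable Zk)
    (hAi : Measurable Ai) (hAj : Measurable Aj) (hAk : Measurable Ak)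
    (hpairs : iIndepFun
      ![fun ω => (Zi ω, Ai ω), fun ω => (Zj ω, Aj ω), fun ω => (Zk ω, Ak ω)] μ)
    (hshocks : IndepFun E (fun ω => ((Zi ω, Ai ω), (Zj ω, Aj ω), (Zk ω, Ak ω))) μ) :
    IndepFun (fun ω => (E ω, (Zi ω, Ai ω))) (fun ω => (Zj ω, Zk ω)) μ := by
  have hpairs_meas : ∀ n, Measurable
      (![fun ω => (Zi ω, Ai ω), fun ω => (Zj ω, Aj ω), fun ω => (Zk ω, Ak ω)] n) := by
    intro n; fin_cases n
    exacts [hZi.prodMk hAi, hZj.prodMk hAj, hZk.prodMk hAk]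
  have hi_jk : IndepFun (fun ω => (Zi ω, Ai ω)) (fun ω => (Zj ω, Zk ω)) μ :=
    (hpairs.indepFun_prodMk hpairs_meas 1 2 0 (by decide) (by decide)).symm.comp
      (ψ := fun q : (β × γ) × (β × γ) => (q.1.1, q.2.1)) measurable_id (by fun_prop)
  have hE_ijk : IndepFun E (fun ω => ((Zi ω, Ai ω), (Zj ω, Zk ω))) μ :=
    hshocks.comp (ψ := fun q : (β × γ) × (β × γ) × (β × γ) => (q.1, q.2.1.1, q.2.2.1))
      measurable_id (by fun_prop)
  exact hE_ijk.prodMk_left_of_prodMk_right hE (by fun_prop) (by fun_prop) hi_jk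

end ProbabilityTheory

section Triad

variable {aᵢ aⱼ aₖ eᵢⱼ eᵢₖ eⱼₖ dᵢⱼ dᵢₖ dⱼₖ : ℝ}

theorem residual_lt_of_triad
    (h : (if aᵢ + aⱼ + eᵢⱼ ≤ dᵢⱼ then 1 else 0 : ℝ) * (if aᵢ + aₖ + eᵢₖ ≤ dᵢₖ then 1 else 0) *
      (1 - if aⱼ + aₖ + eⱼₖ ≤ dⱼₖ then 1 else 0) = 1) :
    2 * aᵢ + eᵢⱼ + eᵢₖ - eⱼₖ < dᵢⱼ + dᵢₖ - dⱼₖ := by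
  split_ifs at h <;> norm_num at h
  linarith

theorem lt_residual_of_flipped_triad
    (h : (1 - if aᵢ + aⱼ + eᵢⱼ ≤ dᵢⱼ then 1 else 0 : ℝ) *
      (1 - if aᵢ + aₖ + eᵢₖ ≤ dᵢₖ then 1 else 0) * (if aⱼ + aₖ + eⱼₖ ≤ dⱼₖ then 1 else 0) = 1) :
    dᵢⱼ + dᵢₖ - dⱼₖ < 2 * aᵢ + eᵢⱼ + eᵢₖ - eⱼₖ := by
  split_ifs at h <;> norm_num at h
  linarith

end Triad

theorem triad_three_link_conditional_bounds_general
    {Ω : Type*} [MeasurableSpace Ω] (P : Measure Ω) [IsProbabilityMeasure P]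
    {β : Type*} [MeasurableSpace β] [MeasurableSingletonClass β]
    (Zi Zj Zk : Ω → β) (Ai Aj Ak : Ω → ℝ)
    (hZi : Measurable Zi) (hZj : Measurable Zj) (hZk : Measurable Zk)
    (hAi : Measurable Ai) (hAj : Measurable Aj) (hAk : Measurable Ak)
    (hindep_pairs : iIndepFun
      ![fun ω => (Zi ω, Ai ω), fun ω => (Zj ω, Aj ω), fun ω => (Zk ω, Ak ω)] P)
    (εij εik εjk : Ω → ℝ)
    (hεij : Measurable εij) (hεik : Measurable εik) (hεjk : Measurable εjk)
    (hindep_shocks : IndepFun (fun ω => (εij ω, εik ω, εjk ω))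
      (fun ω => ((Zi ω, Ai ω), (Zj ω, Aj ω), (Zk ω, Ak ω))) P)
    (δij δik δjk : Ω → ℝ)
    (Yij Yik Yjk : Ω → ℝ)
    (hYij : Yij = fun ω => if Ai ω + Aj ω + εij ω ≤ δij ω then (1 : ℝ) else 0)
    (hYik : Yik = fun ω => if Ai ω + Ak ω + εik ω ≤ δik ω then (1 : ℝ) else 0)
    (hYjk : Yjk = fun ω => if Aj ω + Ak ω + εjk ω ≤ δjk ω then (1 : ℝ) else 0)
    (u : Ω → ℝ) (hu : u = fun ω => 2 * Ai ω + εij ω + εik ω - εjk ω)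
    (c : ℝ) (zi zj zk : β)
    (hpos : 0 < P {ω | Zi ω = zi ∧ Zj ω = zj ∧ Zk ω = zk}) :
    P[{ω | u ω ≤ c} | {ω | Zi ω = zi ∧ Zj ω = zj ∧ Zk ω = zk}]
        = P[{ω | u ω ≤ c} | {ω | Zi ω = zi}] ∧
    P[{ω | Yij ω * Yik ω * (1 - Yjk ω) = 1 ∧ δij ω + δik ω - δjk ω ≤ c}
        | {ω | Zi ω = zi ∧ Zj ω = zj ∧ Zk ω = zk}]
        ≤ P[{ω | u ω ≤ c} | {ω | Zi ω = zi}] ∧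
    P[{ω | (1 - Yij ω) * (1 - Yik ω) * Yjk ω = 1 ∧ c < δij ω + δik ω - δjk ω}
        | {ω | Zi ω = zi ∧ Zj ω = zj ∧ Zk ω = zk}]
        ≤ 1 - P[{ω | u ω ≤ c} | {ω | Zi ω = zi}] := by
  subst hYij hYik hYjk hu
  set S := {ω | Zi ω = zi ∧ Zj ω = zj ∧ Zk ω = zk}
  have hu_indep : IndepFun (fun ω => (2 * Ai ω + εij ω + εik ω - εjk ω, Zi ω))
      (fun ω => (Zj ω, Zk ω)) P :=
    (indepFun_shocks_first_pair_other_labels (by fun_prop) hZi hZj hZk hAi hAj hAk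
      hindep_pairs hindep_shocks).comp
      (φ := fun p => (2 * p.2.2 + p.1.1 + p.1.2.1 - p.1.2.2, p.2.1)) (by fun_prop) measurable_id
  have hS : S = Zi ⁻¹' {zi} ∩ (fun ω => (Zj ω, Zk ω)) ⁻¹' {(zj, zk)} := by
    ext ω; simp [S]
  have hG : P[{ω | 2 * Ai ω + εij ω + εik ω - εjk ω ≤ c} | S]
      = P[{ω | 2 * Ai ω + εij ω + εik ω - εjk ω ≤ c} | {ω | Zi ω = zi}] := by
    rw [hS]
    exact hu_indep.cond_preimage_inter_eq (A := Set.Iic c) hZi (by fun_prop) measurableSet_Iic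
      (measurableSet_singleton _) (measurableSet_singleton _) (hS ▸ hpos.ne')
  have : IsProbabilityMeasure P[|S] := cond_isProbabilityMeasure hpos.ne'
  refine ⟨hG, ?_, ?_⟩
  · exact le_of_le_of_eq (measure_mono fun _ hω =>
      ((residual_lt_of_triad hω.1).trans_le hω.2).le) hG
  · calc _ ≤ P[{ω | 2 * Ai ω + εij ω + εik ω - εjk ω ≤ c}ᶜ | S] :=
          measure_mono fun _ hω => (hω.2.trans (lt_residual_of_flipped_triad hω.1)).not_ge
      _ = 1 - P[{ω | 2 * Ai ω + εij ω + εik ω - εjk ω ≤ c} | S] :=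
          prob_compl_eq_one_sub (measurableSet_le (by fun_prop) measurable_const)
      _ = _ := by rw [hG]

/-- Three-link triad bounds (Proposition): with `(Z_i,A_i),(Z_j,A_j),(Z_k,A_k)`
i.i.d. and the shocks independent of them, (i) the conditional CDF of
`u = 2A_i + ε_ij + ε_ik − ε_jk` given `(Z_i,Z_j,Z_k) = (z_i,z_j,z_k)` depends
only on `z_i`, (ii) the conditional probability of the triad event with
`{Δδ ≤ c}` is below `G₃(c|z_i)`, and (iii) that of the flipped event with
`{Δδ > c}` is below `1 − G₃(c|z_i)`. -/
theorem triad_three_link_conditional_bounds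
    {Ω : Type*} [MeasurableSpace Ω] (P : Measure Ω) [IsProbabilityMeasure P]
    {β : Type*} [MeasurableSpace β] [Countable β] [MeasurableSingletonClass β]
    (Zi Zj Zk : Ω → β) (Ai Aj Ak : Ω → ℝ)
    (hZi : Measurable Zi) (hZj : Measurable Zj) (hZk : Measurable Zk)
    (hAi : Measurable Ai) (hAj : Measurable Aj) (hAk : Measurable Ak)
    (hindep_pairs : iIndepFun
      ![fun ω => (Zi ω, Ai ω), fun ω => (Zj ω, Aj ω), fun ω => (Zk ω, Ak ω)] P)
    (hident_ij : IdentDistrib (fun ω => (Zi ω, Ai ω)) (fun ω => (Zj ω, Aj ω)) P P)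
    (hident_ik : IdentDistrib (fun ω => (Zi ω, Ai ω)) (fun ω => (Zk ω, Ak ω)) P P)
    (εij εik εjk : Ω → ℝ)
    (hεij : Measurable εij) (hεik : Measurable εik) (hεjk : Measurable εjk)
    (hindep_shocks : IndepFun (fun ω => (εij ω, εik ω, εjk ω))
      (fun ω => ((Zi ω, Ai ω), (Zj ω, Aj ω), (Zk ω, Ak ω))) P)
    (δij δik δjk : Ω → ℝ)
    (hδij : Measurable δij) (hδik : Measurable δik) (hδjk : Measurable δjk)
    (Yij Yik Yjk : Ω → ℝ)
    (hYij : Yij = fun ω => if Ai ω + Aj ω + εij ω ≤ δij ω then (1 : ℝ) else 0)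
    (hYik : Yik = fun ω => if Ai ω + Ak ω + εik ω ≤ δik ω then (1 : ℝ) else 0)
    (hYjk : Yjk = fun ω => if Aj ω + Ak ω + εjk ω ≤ δjk ω then (1 : ℝ) else 0)
    (u : Ω → ℝ) (hu : u = fun ω => 2 * Ai ω + εij ω + εik ω - εjk ω)
    (c : ℝ) (zi zj zk : β)
    (hpos : 0 < P {ω | Zi ω = zi ∧ Zj ω = zj ∧ Zk ω = zk}) :
    P[{ω | u ω ≤ c} | {ω | Zi ω = zi ∧ Zj ω = zj ∧ Zk ω = zk}]
        = P[{ω | u ω ≤ c} | {ω | Zi ω = zi}] ∧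
    P[{ω | Yij ω * Yik ω * (1 - Yjk ω) = 1 ∧ δij ω + δik ω - δjk ω ≤ c}
        | {ω | Zi ω = zi ∧ Zj ω = zj ∧ Zk ω = zk}]
        ≤ P[{ω | u ω ≤ c} | {ω | Zi ω = zi}] ∧
    P[{ω | (1 - Yij ω) * (1 - Yik ω) * Yjk ω = 1 ∧ c < δij ω + δik ω - δjk ω}
        | {ω | Zi ω = zi ∧ Zj ω = zj ∧ Zk ω = zk}]
        ≤ 1 - P[{ω | u ω ≤ c} | {ω | Zi ω = zi}] :=
  triad_three_link_conditional_bounds_general P Zi Zj Zk Ai Aj Ak hZi hZj hZk hAi hAj hAk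
    hindep_pairs εij εik εjk hεij hεik hεjk hindep_shocks δij δik δjk Yij Yik Yjk hYij hYik hYjk u
    hu c zi zj zk hpos
end

section
/- Let (Ω, F, P) be a probability space. Let (Z_i, A_i), (Z_j, A_j), (Z_k, A_k) be independent and identically distributed random pairs, where each Z takes values in a countable measurable space and each A is real-valued. Let ε_{ij}, ε_{ik} be real random variables such that (ε_{ij}, ε_{ik}) is independent of ((Z_i, A_i), (Z_j, A_j), (Z_k, A_k)). Let δ_{ij}, δ_{ik} be arbitrary real random variables, define Y_{ab} := 1{A_a + A_b + ε_{ab} ≤ δ_{ab}} and u := A_j − A_k + ε_{ij} − ε_{ik}. Then for every c ∈ ℝ and all values z_i, z_j, z_k with P(Z_i = z_i, Z_j = z_j, Z_k = z_k) > 0: (i) P(u ≤ c | Z_i = z_i, Z_j = z_j, Z_k = z_k) = P(u ≤ c | Z_j = z_j, Z_k = z_k) =: G_2(c | z_j, z_k); (ii) P( Y_{ij} (1 − Y_{ik}) = 1 and δ_{ij} − δ_{ik} ≤ c | Z_i = z_i, Z_j = z_j, Z_k = z_k ) ≤ G_2(c | z_j, z_k); and (iii) P( (1 − Y_{ij}) Y_{ik}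 = 1 and δ_{ij} − δ_{ik} > c | Z_i = z_i, Z_j = z_j, Z_k = z_k ) ≤ 1 − G_2(c | z_j, z_k). -/
open MeasureTheory ProbabilityTheory

/-!
Put `X := (Z_i, A_i)` and `W := ((ε_ij, ε_ik), (Z_j, A_j), (Z_k, A_k))`. Independence of the
three agents together with independence of the shocks from all of them makes `W` independent
of `X`. Both `{u ≤ c}` and `{Z_j = z_j, Z_k = z_k}` are `W`-events while `{Z_i = z_i}` is an
`X`-event, so conditioning additionally on `Z_i = z_i` leaves the probability of `{u ≤ c}`
unchanged, which is (i). On the two-link event `Y_ij = 1, Y_ik = 0` the link conditions give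
`A_i + A_j + ε_ij ≤ δ_ij` and `δ_ik < A_i + A_k + ε_ik`; subtracting eliminates `A_i` and yields
`u < δ_ij − δ_ik`, so together with `δ_ij − δ_ik ≤ c` the event lies in `{u ≤ c}`, which is (ii).
Symmetrically the flipped event lies in `{u > c}`, which is (iii).
-/

theorem MeasureTheory.Measure.map_prod_prod_swap_assoc {α β γ : Type*} [MeasurableSpace α]
    [MeasurableSpace β] [MeasurableSpace γ] (μ : Measure α) (ν : Measure β) (τ : Measure γ)
    [SFinite μ] [SFinite ν] [SFinite τ] :
    (μ.prod (ν.prod τ)).map (fun p => ((p.1, p.2.2), p.2.1)) = (μ.prod τ).prod ν := by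
  have h : (fun p : α × β × γ => ((p.1, p.2.2), p.2.1))
      = MeasurableEquiv.prodAssoc.symm ∘ Prod.map id Prod.swap := rfl
  rw [h, ← Measure.map_map (by fun_prop) (by fun_prop), ← Measure.map_prod_map _ _ measurable_id
    measurable_swap, Measure.map_id, Measure.prod_swap, ← Measure.prodAssoc_prod,
    Measure.map_map (by fun_prop) (by fun_prop)]
  simp

theorem ProbabilityTheory.IndepFun.prodMk_indepFun_of_indepFun_prodMk {Ω α β γ : Type*}
    [MeasurableSpace Ω] [MeasurableSpace α] [MeasurableSpace β] [MeasurableSpace γ]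
    {P : Measure Ω} [IsProbabilityMeasure P] {E : Ω → γ} {X : Ω → α} {Y : Ω → β}
    (hE : Measurable E) (hX : Measurable X) (hY : Measurable Y)
    (hE_XY : IndepFun E (fun ω => (X ω, Y ω)) P) (hXY : IndepFun X Y P) :
    IndepFun (fun ω => (E ω, Y ω)) X P := by
  have hEY : IndepFun E Y P := hE_XY.comp measurable_id measurable_snd
  rw [indepFun_iff_map_prod_eq_prod_map_map (by fun_prop) (by fun_prop)] at hE_XY hXY hEY ⊢
  calc P.map (fun ω => ((E ω, Y ω), X ω))
      = (P.map (fun ω => (E ω, X ω, Y ω))).map (fun p => ((p.1, p.2.2), p.2.1)) := by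
        rw [Measure.map_map (by fun_prop) (by fun_prop)]; rfl
    _ = ((P.map E).prod (P.map Y)).prod (P.map X) := by
        rw [hE_XY, hXY, Measure.map_prod_prod_swap_assoc]
    _ = _ := by rw [hEY]

theorem ProbabilityTheory.cond_preimage_inter_preimage_of_indepFun {Ω α β : Type*}
    [MeasurableSpace Ω] [MeasurableSpace α] [MeasurableSpace β]
    {P : Measure Ω} [IsFiniteMeasure P] {W : Ω → α} {X : Ω → β} (hWX : IndepFun W X P)
    (hW : Measurable W) (hX : Measurable X) {S B : Set α} {T : Set β}
    (hS : MeasurableSet S) (hB : MeasurableSet B) (hT : MeasurableSet T) (hT0 : P (X ⁻¹' T) ≠ 0) :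
    P[W ⁻¹' S | X ⁻¹' T ∩ W ⁻¹' B] = P[W ⁻¹' S | W ⁻¹' B] := by
  rw [cond_apply ((hX hT).inter (hW hB)), cond_apply (hW hB), ← ENNReal.div_eq_inv_mul,
    ← ENNReal.div_eq_inv_mul, Set.inter_assoc, ← Set.preimage_inter,
    hWX.symm.measure_inter_preimage_eq_mul _ _ hT (hB.inter hS),
    hWX.symm.measure_inter_preimage_eq_mul _ _ hT hB,
    ENNReal.mul_div_mul_left _ _ hT0 (measure_ne_top _ _)]

theorem ite_mul_one_sub_ite_eq_one_iff {p q : Prop} [Decidable p] [Decidable q] :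
    ((if p then 1 else 0 : ℝ) * (1 - if q then 1 else 0) = 1) ↔ p ∧ ¬q := by
  split_ifs <;> norm_num [*]

theorem triad_two_link_conditional_bounds_general
    {Ω : Type*} [MeasurableSpace Ω] (P : Measure Ω) [IsProbabilityMeasure P]
    {β : Type*} [MeasurableSpace β] [MeasurableSingletonClass β]
    (Zi Zj Zk : Ω → β) (Ai Aj Ak : Ω → ℝ)
    (hZi : Measurable Zi) (hZj : Measurable Zj) (hZk : Measurable Zk)
    (hAi : Measurable Ai) (hAj : Measurable Aj) (hAk : Measurable Ak)
    (hindep_pairs : iIndepFun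
      ![fun ω => (Zi ω, Ai ω), fun ω => (Zj ω, Aj ω), fun ω => (Zk ω, Ak ω)] P)
    (εij εik : Ω → ℝ)
    (hεij : Measurable εij) (hεik : Measurable εik)
    (hindep_shocks : IndepFun (fun ω => (εij ω, εik ω))
      (fun ω => ((Zi ω, Ai ω), (Zj ω, Aj ω), (Zk ω, Ak ω))) P)
    (δij δik : Ω → ℝ)
    (Yij Yik : Ω → ℝ)
    (hYij : Yij = fun ω => if Ai ω + Aj ω + εij ω ≤ δij ω then (1 : ℝ) else 0)
    (hYik : Yik = fun ω => if Ai ω + Ak ω + εik ω ≤ δik ω then (1 : ℝ) else 0)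
    (u : Ω → ℝ) (hu : u = fun ω => Aj ω - Ak ω + εij ω - εik ω)
    (c : ℝ) (zi zj zk : β)
    (hpos : 0 < P {ω | Zi ω = zi ∧ Zj ω = zj ∧ Zk ω = zk}) :
    P[{ω | u ω ≤ c} | {ω | Zi ω = zi ∧ Zj ω = zj ∧ Zk ω = zk}]
        = P[{ω | u ω ≤ c} | {ω | Zj ω = zj ∧ Zk ω = zk}] ∧
    P[{ω | Yij ω * (1 - Yik ω) = 1 ∧ δij ω - δik ω ≤ c}
        | {ω | Zi ω = zi ∧ Zj ω = zj ∧ Zk ω = zk}]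
        ≤ P[{ω | u ω ≤ c} | {ω | Zj ω = zj ∧ Zk ω = zk}] ∧
    P[{ω | (1 - Yij ω) * Yik ω = 1 ∧ c < δij ω - δik ω}
        | {ω | Zi ω = zi ∧ Zj ω = zj ∧ Zk ω = zk}]
        ≤ 1 - P[{ω | u ω ≤ c} | {ω | Zj ω = zj ∧ Zk ω = zk}] := by
  subst hYij hYik hu
  set X : Ω → β × ℝ := fun ω => (Zi ω, Ai ω)
  set W : Ω → (ℝ × ℝ) × (β × ℝ) × (β × ℝ) :=
    fun ω => ((εij ω, εik ω), (Zj ω, Aj ω), (Zk ω, Ak ω))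
  have hX : Measurable X := hZi.prodMk hAi
  have hW : Measurable W := by fun_prop
  have hWX : IndepFun W X P := by
    refine hindep_shocks.prodMk_indepFun_of_indepFun_prodMk (by fun_prop) hX (by fun_prop) ?_
    refine (hindep_pairs.indepFun_prodMk (fun i => ?_) 1 2 0 (by decide) (by decide)).symm
    fin_cases i
    exacts [hX, hZj.prodMk hAj, hZk.prodMk hAk]
  have hXzi : P (X ⁻¹' {q | q.1 = zi}) ≠ 0 :=
    fun h => hpos.ne' (measure_mono_null (fun ω hω => hω.1) h)
  have hu_meas : MeasurableSet {ω | Aj ω - Ak ω + εij ω - εik ω ≤ c} :=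
    measurableSet_le (by fun_prop) (by fun_prop)
  have hi : P[{ω | Aj ω - Ak ω + εij ω - εik ω ≤ c} | {ω | Zi ω = zi ∧ Zj ω = zj ∧ Zk ω = zk}]
      = P[{ω | Aj ω - Ak ω + εij ω - εik ω ≤ c} | {ω | Zj ω = zj ∧ Zk ω = zk}] := by
    have hcond := cond_preimage_inter_preimage_of_indepFun hWX hW hX
      (S := {p | p.2.1.2 - p.2.2.2 + p.1.1 - p.1.2 ≤ c}) (B := {p | p.2.1.1 = zj ∧ p.2.2.1 = zk})
      (measurableSet_le (by fun_prop) (by fun_prop)) (by measurability)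
      (measurable_fst (measurableSet_singleton zi)) hXzi
    -- `{Zi = zi ∧ Zj = zj ∧ Zk = zk}` is `X ⁻¹' {zi} ∩ W ⁻¹' {(zj, zk)}` definitionally
    exact hcond
  have := cond_isProbabilityMeasure (μ := P) hpos.ne'
  refine ⟨hi, (measure_mono ?_).trans_eq hi, ((measure_mono ?_).trans_eq
    (prob_compl_eq_one_sub hu_meas)).trans_eq (by rw [hi])⟩
  · rintro ω ⟨hlink, hδ⟩
    obtain ⟨hij, hik⟩ := ite_mul_one_sub_ite_eq_one_iff.mp hlink
    show Aj ω - Ak ω + εij ω - εik ω ≤ c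
    linarith [not_le.mp hik]
  · rintro ω ⟨hlink, hδ⟩
    obtain ⟨hik, hij⟩ := ite_mul_one_sub_ite_eq_one_iff.mp ((mul_comm _ _).trans hlink)
    show ¬Aj ω - Ak ω + εij ω - εik ω ≤ c
    linarith [not_le.mp hij]

/-- Two-link triad bounds (Proposition): with `(Z_i,A_i),(Z_j,A_j),(Z_k,A_k)`
i.i.d. and the shocks independent of them, (i) the conditional CDF of
`u = A_j − A_k + ε_ij − ε_ik` given `(Z_i,Z_j,Z_k) = (z_i,z_j,z_k)` depends
only on `(z_j,z_k)`, (ii) the conditional probability of the two-link event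
with `{δ_ij − δ_ik ≤ c}` is below `G₂(c|z_j,z_k)`, and (iii) that of the
flipped event with `{δ_ij − δ_ik > c}` is below `1 − G₂(c|z_j,z_k)`. -/
theorem triad_two_link_conditional_bounds
    {Ω : Type*} [MeasurableSpace Ω] (P : Measure Ω) [IsProbabilityMeasure P]
    {β : Type*} [MeasurableSpace β] [Countable β] [MeasurableSingletonClass β]
    (Zi Zj Zk : Ω → β) (Ai Aj Ak : Ω → ℝ)
    (hZi : Measurable Zi) (hZj : Measurable Zj) (hZk : Measurable Zk)
    (hAi : Measurable Ai) (hAj : Measurable Aj) (hAk : Measurable Ak)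
    (hindep_pairs : iIndepFun
      ![fun ω => (Zi ω, Ai ω), fun ω => (Zj ω, Aj ω), fun ω => (Zk ω, Ak ω)] P)
    (hident_ij : IdentDistrib (fun ω => (Zi ω, Ai ω)) (fun ω => (Zj ω, Aj ω)) P P)
    (hident_ik : IdentDistrib (fun ω => (Zi ω, Ai ω)) (fun ω => (Zk ω, Ak ω)) P P)
    (εij εik : Ω → ℝ)
    (hεij : Measurable εij) (hεik : Measurable εik)
    (hindep_shocks : IndepFun (fun ω => (εij ω, εik ω))
      (fun ω => ((Zi ω, Ai ω), (Zj ω, Aj ω), (Zk ω, Ak ω))) P)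
    (δij δik : Ω → ℝ)
    (hδij : Measurable δij) (hδik : Measurable δik)
    (Yij Yik : Ω → ℝ)
    (hYij : Yij = fun ω => if Ai ω + Aj ω + εij ω ≤ δij ω then (1 : ℝ) else 0)
    (hYik : Yik = fun ω => if Ai ω + Ak ω + εik ω ≤ δik ω then (1 : ℝ) else 0)
    (u : Ω → ℝ) (hu : u = fun ω => Aj ω - Ak ω + εij ω - εik ω)
    (c : ℝ) (zi zj zk : β)
    (hpos : 0 < P {ω | Zi ω = zi ∧ Zj ω = zj ∧ Zk ω = zk}) :
    P[{ω | u ω ≤ c} | {ω | Zi ω = zi ∧ Zj ω = zj ∧ Zk ω = zk}]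
        = P[{ω | u ω ≤ c} | {ω | Zj ω = zj ∧ Zk ω = zk}] ∧
    P[{ω | Yij ω * (1 - Yik ω) = 1 ∧ δij ω - δik ω ≤ c}
        | {ω | Zi ω = zi ∧ Zj ω = zj ∧ Zk ω = zk}]
        ≤ P[{ω | u ω ≤ c} | {ω | Zj ω = zj ∧ Zk ω = zk}] ∧
    P[{ω | (1 - Yij ω) * Yik ω = 1 ∧ c < δij ω - δik ω}
        | {ω | Zi ω = zi ∧ Zj ω = zj ∧ Zk ω = zk}]
        ≤ 1 - P[{ω | u ω ≤ c} | {ω | Zj ω = zj ∧ Zk ω = zk}] :=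
  triad_two_link_conditional_bounds_general P Zi Zj Zk Ai Aj Ak hZi hZj hZk hAi hAj hAk hindep_pairs
    εij εik hεij hεik hindep_shocks δij δik Yij Yik hYij hYik u hu c zi zj zk hpos
end

section
/- Let (Ω, F, P) be a probability space and S a finite set of agents. Let (Z_i, A_i)_{i ∈ S} be independent and identically distributed random pairs, with each Z_i taking values in a countable measurable space and each A_i real-valued. Let E be a finite set of unordered pairs of distinct elements of S with weights ω : E → ℝ, and let (ε_e)_{e ∈ E} be real random variables such that the vector (ε_e)_{e ∈ E} is independent of ((Z_i, A_i))_{i ∈ S}. Let (δ_e)_{e ∈ E} be arbitrary real random variables and define Y_e := 1{A_a + A_b + ε_e ≤ δ_e} for e = {a,b}. Set σ_i := Σ_{e ∋ i} ω_e, S_R := {i ∈ S : σ_i ≠ 0}, E⁺ := {e : ω_e > 0}, E⁻ := {e : ω_e < 0}, and U := Σ_{i ∈ S_R} σ_i A_i + Σ_{e ∈ E} ω_e ε_e. Then for every c ∈ ℝ and every value z_S = (z_i)_{i ∈ S} with P(Z_S = z_S) > 0: (i) P(U ≤ c | Z_S = z_S) = P(U ≤ c | Z_{S_R} = z_{S_R}),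 i.e., the conditional CDF of U given Z_S depends only on the coordinates of the retained agents S_R (and equals the unconditional probability P(U ≤ c) when S_R = ∅); (ii) P( Y_e = 1 for all e ∈ E⁺, Y_e = 0 for all e ∈ E⁻, and Σ_e ω_e δ_e ≤ c | Z_S = z_S ) ≤ P(U ≤ c | Z_{S_R} = z_{S_R}); and (iii) P( Y_e = 0 for all e ∈ E⁺, Y_e = 1 for all e ∈ E⁻, and Σ_e ω_e δ_e > c | Z_S = z_S ) ≤ 1 − P(U ≤ c | Z_{S_R} = z_{S_R}). -/
/-!
Since the shocks are independent of the agents and the agents of one another, the pair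
(shocks, retained agents) is independent of the dropped agents; the event `U ≤ c` is
generated by that pair, so conditioning on the dropped `Z_i` changes nothing.
For the bounds, every agent collects exactly the weight `σ_i` from its links, so
`U = Σ_e ω_e (A_a + A_b + ε_e)`. On the event of (ii) the sign of `ω_e` together with `Y_e`
gives `ω_e (A_a + A_b + ε_e) ≤ ω_e δ_e` link by link, whence `U ≤ Σ_e ω_e δ_e ≤ c`;
(iii) is the mirror image, landing in the complement of `{U ≤ c}`.
-/

open MeasureTheory ProbabilityTheory

theorem cond_inter_eq_cond_of_indep {Ω : Type*} {m₁ m₂ m : MeasurableSpace Ω} {μ : Measure Ω}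
    [IsFiniteMeasure μ] (h : Indep m₁ m₂ μ) (h₁ : m₁ ≤ m) (h₂ : m₂ ≤ m) {s t t' : Set Ω}
    (hs : MeasurableSet[m₁] s) (ht : MeasurableSet[m₁] t) (ht' : MeasurableSet[m₂] t')
    (h0 : μ t' ≠ 0) : μ[s | t ∩ t'] = μ[s | t] := by
  have hind := (Indep_iff _ _ μ).1 h
  have hts : t ∩ t' ∩ s = t ∩ s ∩ t' := Set.inter_right_comm _ _ _
  rw [cond_apply (h₁ _ ht |>.inter (h₂ _ ht')), cond_apply (h₁ _ ht), hts,
    hind _ _ (ht.inter hs) ht', hind _ _ ht ht', ← ENNReal.div_eq_inv_mul,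
    ← ENNReal.div_eq_inv_mul, ENNReal.mul_div_mul_right _ _ h0 (measure_ne_top μ t')]

theorem indepFun_prodMk_of_indepFun_prodMk {Ω α γ₁ γ₂ : Type*} [MeasurableSpace Ω]
    [MeasurableSpace α] [MeasurableSpace γ₁] [MeasurableSpace γ₂]
    {P : Measure Ω} [IsFiniteMeasure P] {X : Ω → α} {Y : Ω → γ₁} {W : Ω → γ₂}
    (hX : Measurable X) (hY : Measurable Y) (hW : Measurable W)
    (hX_YW : IndepFun X (fun ω => (Y ω, W ω)) P) (hYW : IndepFun Y W P) :
    IndepFun (fun ω => (X ω, Y ω)) W P := by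
  have hXY : IndepFun X Y P := hX_YW.comp measurable_id measurable_fst
  have hYW' := (indepFun_iff_map_prod_eq_prod_map_map hY.aemeasurable hW.aemeasurable).1 hYW
  have hXY' := (indepFun_iff_map_prod_eq_prod_map_map hX.aemeasurable hY.aemeasurable).1 hXY
  have hX_YW' := (indepFun_iff_map_prod_eq_prod_map_map hX.aemeasurable
    (hY.prodMk hW).aemeasurable).1 hX_YW
  rw [indepFun_iff_map_prod_eq_prod_map_map (hX.prodMk hY).aemeasurable hW.aemeasurable]
  have hassoc : (fun ω => ((X ω, Y ω), W ω))
      = MeasurableEquiv.prodAssoc.symm ∘ (fun ω => (X ω, (Y ω, W ω))) := rfl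
  rw [hassoc, ← Measure.map_map MeasurableEquiv.prodAssoc.symm.measurable
      (hX.prodMk (hY.prodMk hW)), hX_YW', hYW', hXY', ← Measure.prodAssoc_prod, Measure.map_map
      MeasurableEquiv.prodAssoc.symm.measurable MeasurableEquiv.prodAssoc.measurable]
  simp

theorem cond_forall_mem_eq_cond_forall_mem_finset
    {Ω ι κ γ : Type*} [MeasurableSpace Ω] {P : Measure Ω} [IsFiniteMeasure P]
    [Fintype ι] [DecidableEq ι] [MeasurableSpace κ] [MeasurableSpace γ]
    {V : ι → Ω → γ} (hV : ∀ i, Measurable (V i)) (hV_indep : iIndepFun V P)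
    {ξ : Ω → κ} (hξ : Measurable ξ) (hξV : IndepFun ξ (fun ω i => V i ω) P) (R : Finset ι)
    {s : Set Ω}
    (hs : MeasurableSet[.comap (fun ω => (ξ ω, fun i : R => V i ω)) inferInstance] s)
    {T : ι → Set γ} (hT : ∀ i, MeasurableSet (T i)) (hpos : P {ω | ∀ i, V i ω ∈ T i} ≠ 0) :
    P[s | {ω | ∀ i, V i ω ∈ T i}] = P[s | {ω | ∀ i ∈ R, V i ω ∈ T i}] := by
  set X := fun ω => (ξ ω, fun i : R => V i ω)
  set W := fun ω (i : ↥Rᶜ) => V i ω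
  have hVR : Measurable fun ω (i : R) => V i ω := measurable_pi_lambda _ fun i => hV i
  have hW : Measurable W := measurable_pi_lambda _ fun i => hV i
  have hsplit : Measurable fun v : ι → γ => ((fun i : R => v i), (fun i : ↥Rᶜ => v i)) :=
    (measurable_pi_lambda _ fun i => measurable_pi_apply _).prodMk
      (measurable_pi_lambda _ fun i => measurable_pi_apply _)
  have hXW : IndepFun X W P :=
    indepFun_prodMk_of_indepFun_prodMk hξ hVR hW (hξV.comp measurable_id hsplit)
      (hV_indep.indepFun_finset R Rᶜ disjoint_compl_right hV)
  have hR : MeasurableSet[.comap X inferInstance] {ω | ∀ i ∈ R, V i ω ∈ T i} := by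
    refine ⟨{x | ∀ i : R, x.2 i ∈ T i}, ?_, by ext; simp [X]⟩
    simp only [Set.ofPred_forall]
    exact .iInter fun i => (measurable_pi_apply i).comp measurable_snd (hT i)
  have hRc : MeasurableSet[.comap W inferInstance] {ω | ∀ i ∈ Rᶜ, V i ω ∈ T i} := by
    refine ⟨{x | ∀ i : ↥Rᶜ, x i ∈ T i}, ?_, by ext; simp [W]⟩
    simp only [Set.ofPred_forall]
    exact .iInter fun i => measurable_pi_apply i (hT i)
  have hsplit_set : {ω | ∀ i, V i ω ∈ T i}
      = {ω | ∀ i ∈ R, V i ω ∈ T i} ∩ {ω | ∀ i ∈ Rᶜ, V i ω ∈ T i} := by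
    ext ω
    simp only [Set.mem_ofPred_eq, Set.mem_inter_iff, Finset.mem_compl]
    exact ⟨fun h => ⟨fun i _ => h i, fun i _ => h i⟩,
      fun h i => if hi : i ∈ R then h.1 i hi else h.2 i hi⟩
  rw [hsplit_set] at hpos ⊢
  have hpos' : P {ω | ∀ i ∈ Rᶜ, V i ω ∈ T i} ≠ 0 :=
    fun h0 => hpos (measure_mono_null Set.inter_subset_right h0)
  exact cond_inter_eq_cond_of_indep ((IndepFun_iff_Indep _ _ _).1 hXW)
    (hξ.prodMk hVR).comap_le hW.comap_le hs hR hRc hpos'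

theorem measurable_comap_sum_mul_add_sum_mul {Ω ι κ β : Type*} [MeasurableSpace β]
    (Z : ι → Ω → β) (A : ι → Ω → ℝ) (ε : κ → Ω → ℝ) (R : Finset ι) (E : Finset κ)
    (a : ι → ℝ) (w : κ → ℝ) :
    Measurable[.comap (fun ω0 => (fun e : E => ε e ω0, fun i : R => (Z i ω0, A i ω0)))
      inferInstance] fun ω0 => ∑ i ∈ R, a i * A i ω0 + ∑ e ∈ E, w e * ε e ω0 := by
  set X := fun ω0 => (fun e : E => ε e ω0, fun i : R => (Z i ω0, A i ω0))
  have hA_R : ∀ i ∈ R, Measurable[.comap X inferInstance] (A i) := fun i hi =>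
    (show Measurable fun x : (E → ℝ) × (R → β × ℝ) => (x.2 ⟨i, hi⟩).2 by
      fun_prop).comp (comap_measurable X)
  have hε_E : ∀ e ∈ E, Measurable[.comap X inferInstance] (ε e) := fun e he =>
    (show Measurable fun x : (E → ℝ) × (R → β × ℝ) => x.1 ⟨e, he⟩ by
      fun_prop).comp (comap_measurable X)
  exact (Finset.measurable_sum _ fun i hi => (hA_R i hi).const_mul _).add
    (Finset.measurable_sum _ fun e he => (hε_E e he).const_mul _)

theorem Sym2.lift_add_eq_sum_filter_mem {ι M : Type*} [Fintype ι] [DecidableEq ι]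
    [AddCommMonoid M] (f : ι → M) {e : Sym2 ι} (he : ¬ e.IsDiag) :
    Sym2.lift ⟨fun a b => f a + f b, fun a b => add_comm (f a) (f b)⟩ e
      = ∑ i ∈ Finset.univ.filter (· ∈ e), f i := by
  induction e using Sym2.ind with
  | _ a b =>
    have hab : a ≠ b := by simpa using he
    have hfe : Finset.univ.filter (· ∈ s(a, b)) = {a, b} := by ext; simp
    rw [hfe, Finset.sum_pair hab]
    rfl

theorem sum_mul_sym2_lift_add_eq_sum_incidence_mul {ι R : Type*} [Fintype ι] [DecidableEq ι]
    [CommSemiring R] (E : Finset (Sym2 ι)) (hE : ∀ e ∈ E, ¬ e.IsDiag) (w : Sym2 ι → R)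
    (f : ι → R) :
    ∑ e ∈ E, w e * Sym2.lift ⟨fun a b => f a + f b, fun a b => add_comm (f a) (f b)⟩ e
      = ∑ i, (∑ e ∈ E.filter (i ∈ ·), w e) * f i := by
  calc ∑ e ∈ E, w e * Sym2.lift ⟨fun a b => f a + f b, fun a b => add_comm (f a) (f b)⟩ e
      = ∑ e ∈ E, ∑ i, if i ∈ e then w e * f i else 0 := by
        refine Finset.sum_congr rfl fun e he => ?_
        rw [Sym2.lift_add_eq_sum_filter_mem f (hE e he), Finset.mul_sum, Finset.sum_filter]
    _ = ∑ i, (∑ e ∈ E.filter (i ∈ ·), w e) * f i := by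
        rw [Finset.sum_comm]
        simp only [Finset.sum_mul, Finset.sum_filter, ite_mul, zero_mul]

theorem sum_incidence_mul_add_eq_sum_mul_lift_add {ι R : Type*} [Fintype ι] [DecidableEq ι]
    [CommSemiring R] [DecidableEq R] (E : Finset (Sym2 ι)) (hE : ∀ e ∈ E, ¬ e.IsDiag)
    (w : Sym2 ι → R) (f : ι → R) (x : Sym2 ι → R) :
    (∑ i ∈ Finset.univ.filter (fun i => ∑ e ∈ E.filter (i ∈ ·), w e ≠ 0),
        (∑ e ∈ E.filter (i ∈ ·), w e) * f i) + ∑ e ∈ E, w e * x e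
      = ∑ e ∈ E, w e * (Sym2.lift ⟨fun a b => f a + f b, fun _ _ => add_comm _ _⟩ e + x e) := by
  rw [Finset.sum_filter_of_ne (p := fun i => ∑ e ∈ E.filter (i ∈ ·), w e ≠ 0)
      fun i _ h hi => h (by rw [hi, zero_mul]),
    ← sum_mul_sym2_lift_add_eq_sum_incidence_mul E hE w f, ← Finset.sum_add_distrib]
  simp only [mul_add]

theorem sum_mul_le_sum_mul_of_sign {κ : Type*} (E : Finset κ) (w x d : κ → ℝ)
    (hpos : ∀ e ∈ E, 0 < w e → x e ≤ d e) (hneg : ∀ e ∈ E, w e < 0 → d e ≤ x e) :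
    ∑ e ∈ E, w e * x e ≤ ∑ e ∈ E, w e * d e := by
  refine Finset.sum_le_sum fun e he => ?_
  rcases lt_trichotomy (w e) 0 with hw | hw | hw
  · exact mul_le_mul_of_nonpos_left (hneg e he hw) hw.le
  · simp [hw]
  · exact mul_le_mul_of_nonneg_left (hpos e he hw) hw.le

theorem sum_mul_le_sum_mul_of_ite_pattern {κ : Type*} (E : Finset κ) (w u d : κ → ℝ)
    (h_one : ∀ e ∈ E, 0 < w e → (if u e ≤ d e then (1 : ℝ) else 0) = 1)
    (h_zero : ∀ e ∈ E, w e < 0 → (if u e ≤ d e then (1 : ℝ) else 0) = 0) :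
    ∑ e ∈ E, w e * u e ≤ ∑ e ∈ E, w e * d e :=
  sum_mul_le_sum_mul_of_sign E w u d (fun e he hw => by simpa using h_one e he hw)
    fun e he hw => le_of_lt (by simpa using h_zero e he hw)

theorem sum_mul_le_sum_mul_of_ite_pattern' {κ : Type*} (E : Finset κ) (w u d : κ → ℝ)
    (h_zero : ∀ e ∈ E, 0 < w e → (if u e ≤ d e then (1 : ℝ) else 0) = 0)
    (h_one : ∀ e ∈ E, w e < 0 → (if u e ≤ d e then (1 : ℝ) else 0) = 1) :
    ∑ e ∈ E, w e * d e ≤ ∑ e ∈ E, w e * u e :=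
  sum_mul_le_sum_mul_of_sign E w d u (fun e he hw => le_of_lt (by simpa using h_zero e he hw))
    fun e he hw => by simpa using h_one e he hw

/-- General weighted cycle-based identifying restrictions (Proposition):
with i.i.d. agent pairs `(Z_i, A_i)`, link shocks independent of them,
weights `ω` on links `E`, incidence sums `σ`, retained agents
`S_R = {i : σ_i ≠ 0}`, and residual composite
`U = Σ_{i ∈ S_R} σ_i A_i + Σ_e ω_e ε_e`:
(i) the conditional CDF of `U` given `Z_S = z_S` depends only on the
retained coordinates (and is the unconditional one when `S_R = ∅`);
(ii)-(iii) the bounding-by-c conditional probability inequalities. -/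
theorem weighted_cycle_conditional_bounds
    {Ω : Type*} [MeasurableSpace Ω] (P : Measure Ω) [IsProbabilityMeasure P]
    {ι : Type*} [Fintype ι] [DecidableEq ι]
    {β : Type*} [MeasurableSpace β] [MeasurableSingletonClass β]
    (Z : ι → Ω → β) (A : ι → Ω → ℝ)
    (hZ : ∀ i, Measurable (Z i)) (hA : ∀ i, Measurable (A i))
    (hindep_pairs : iIndepFun
      (fun i => fun ω0 => (Z i ω0, A i ω0)) P)
    (E : Finset (Sym2 ι)) (hE : ∀ e ∈ E, ¬ e.IsDiag)
    (ω : Sym2 ι → ℝ)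
    (ε : Sym2 ι → Ω → ℝ) (hε : ∀ e, Measurable (ε e))
    (hindep_shocks : IndepFun
      (fun ω0 => fun e : {e // e ∈ E} => ε e.1 ω0)
      (fun ω0 => fun i : ι => (Z i ω0, A i ω0)) P)
    (δ : Sym2 ι → Ω → ℝ)
    (Y : Sym2 ι → Ω → ℝ)
    (hY : Y = fun e ω0 =>
      if Sym2.lift ⟨fun a b => A a ω0 + A b ω0, fun a b => by ring⟩ e + ε e ω0
          ≤ δ e ω0 then (1 : ℝ) else 0)
    (σ : ι → ℝ)
    (hσ : σ = fun i => ∑ e ∈ E.filter (fun e => i ∈ e), ω e)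
    (U : Ω → ℝ)
    (hU : U = fun ω0 =>
      (∑ i ∈ Finset.univ.filter (fun i => σ i ≠ 0), σ i * A i ω0)
        + ∑ e ∈ E, ω e * ε e ω0)
    (c : ℝ) (z : ι → β)
    (hpos : 0 < P {ω0 | ∀ i, Z i ω0 = z i}) :
    (P[{ω0 | U ω0 ≤ c} | {ω0 | ∀ i, Z i ω0 = z i}]
        = P[{ω0 | U ω0 ≤ c} | {ω0 | ∀ i, σ i ≠ 0 → Z i ω0 = z i}]) ∧
    ((∀ i, σ i = 0) →
      P[{ω0 | U ω0 ≤ c} | {ω0 | ∀ i, Z i ω0 = z i}] = P {ω0 | U ω0 ≤ c}) ∧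
    (P[{ω0 | (∀ e ∈ E, 0 < ω e → Y e ω0 = 1) ∧ (∀ e ∈ E, ω e < 0 → Y e ω0 = 0) ∧
            (∑ e ∈ E, ω e * δ e ω0) ≤ c} | {ω0 | ∀ i, Z i ω0 = z i}]
        ≤ P[{ω0 | U ω0 ≤ c} | {ω0 | ∀ i, σ i ≠ 0 → Z i ω0 = z i}]) ∧
    (P[{ω0 | (∀ e ∈ E, 0 < ω e → Y e ω0 = 0) ∧ (∀ e ∈ E, ω e < 0 → Y e ω0 = 1) ∧
            c < (∑ e ∈ E, ω e * δ e ω0)} | {ω0 | ∀ i, Z i ω0 = z i}]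
        ≤ 1 - P[{ω0 | U ω0 ≤ c} | {ω0 | ∀ i, σ i ≠ 0 → Z i ω0 = z i}]) := by
  subst hY
  have hU_edges : ∀ ω0, U ω0 = ∑ e ∈ E, ω e *
      (Sym2.lift ⟨fun a b => A a ω0 + A b ω0, fun _ _ => add_comm _ _⟩ e + ε e ω0) := fun ω0 => by
    rw [hU, hσ]
    exact sum_incidence_mul_add_eq_sum_mul_lift_add E hE ω (A · ω0) (ε · ω0)
  set R := Finset.univ.filter fun i => σ i ≠ 0
  have hU_retained := measurable_comap_sum_mul_add_sum_mul Z A ε R E σ ω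
  rw [← hU] at hU_retained
  have hcond : P[{ω0 | U ω0 ≤ c} | {ω0 | ∀ i, Z i ω0 = z i}]
      = P[{ω0 | U ω0 ≤ c} | {ω0 | ∀ i, σ i ≠ 0 → Z i ω0 = z i}] := by
    simpa [R] using cond_forall_mem_eq_cond_forall_mem_finset
      (fun i => (hZ i).prodMk (hA i)) hindep_pairs
      (measurable_pi_lambda _ fun e : E => hε e.1) hindep_shocks R
      (measurableSet_le hU_retained measurable_const) (T := fun i => Prod.fst ⁻¹' {z i})
      (fun i => measurable_fst (measurableSet_singleton _)) hpos.ne'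
  have : IsProbabilityMeasure P[|{ω0 | ∀ i, Z i ω0 = z i}] := cond_isProbabilityMeasure hpos.ne'
  have hU_meas : Measurable U := by rw [hU]; fun_prop
  refine ⟨hcond, fun hσ0 => by simp [hcond, hσ0], ?_, ?_⟩
  · rw [← hcond]
    refine measure_mono ?_
    rintro ω0 ⟨h_one, h_zero, hc⟩
    show U ω0 ≤ c
    rw [hU_edges]
    exact (sum_mul_le_sum_mul_of_ite_pattern E ω _ _ h_one h_zero).trans hc
  · rw [← hcond, ← prob_compl_eq_one_sub (measurableSet_le hU_meas measurable_const)]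
    refine measure_mono ?_
    rintro ω0 ⟨h_zero, h_one, hc⟩
    show ¬ U ω0 ≤ c
    rw [hU_edges, not_le]
    exact hc.trans_le (sum_mul_le_sum_mul_of_ite_pattern' E ω _ _ h_zero h_one)
end

section
/- Let (Ω, F, P) be a probability space and S a finite set of agents. Let (Z_i, A_i)_{i ∈ S} be independent and identically distributed random pairs, with each Z_i taking values in a countable measurable space and each A_i real-valued. Let E be a finite set of unordered pairs of distinct elements of S with weights ω : E → ℝ, and let (ε_e)_{e ∈ E} be real random variables independent of ((Z_i, A_i))_{i ∈ S}. Let (δ_e)_{e ∈ E} be arbitrary real random variables and define Y_e := 1{A_a + A_b + ε_e ≤ δ_e} for e = {a,b}; set σ_i := Σ_{e ∋ i} ω_e, S_R := {i : σ_i ≠ 0}, E⁺ := {e : ω_e > 0}, E⁻ := {e : ω_e < 0}. Then for every c ∈ ℝ and any two values z_S and z'_S of Z_S with P(Z_S = z_S) > 0, P(Z_S = z'_S) > 0, and identical coordinates on S_R (z_i = z'_i for all i ∈ S_R): P( Y_e = 1 for all e ∈ E⁺, Y_e = 0 for all e ∈ E⁻, Σ_e ω_e δ_e ≤ c | Z_S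 = z_S ) + P( Y_e = 0 for all e ∈ E⁺, Y_e = 1 for all e ∈ E⁻, Σ_e ω_e δ_e > c | Z_S = z'_S ) ≤ 1. -/
/-!
On the first pattern every link satisfies `ω_e (A_a + A_b + ε_e) ≤ ω_e δ_e`, so summing gives
`T ≤ Σ ω_e δ_e ≤ c`, where `T := Σ_e ω_e (A_a + A_b + ε_e) = Σ_{i ∈ S_R} σ_i A_i + Σ_e ω_e ε_e`;
on the flipped pattern the same argument gives `T > c`. Both `T` and the event `Z_R = z_R` are
functions of the shocks and the retained agents, which are independent of the remaining agents,
so `P(pattern | Z = z) ≤ P(T ≤ c | Z_R = z_R)` and, as `z'` agrees with `z` on `S_R`,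
`P(flipped pattern | Z = z') ≤ P(T > c | Z_R = z_R)`.
-/

open MeasureTheory ProbabilityTheory

namespace ProbabilityTheory

variable {Ω : Type*} {mΩ : MeasurableSpace Ω} {μ : Measure Ω}

theorem indep_sup_left_of_indep_sup_right [IsZeroOrProbabilityMeasure μ]
    {m₁ m₂ m₃ : MeasurableSpace Ω} (h₁ : m₁ ≤ mΩ) (h₂ : m₂ ≤ mΩ) (h₃ : m₃ ≤ mΩ)
    (h₁₂₃ : Indep m₁ (m₂ ⊔ m₃) μ) (h₂₃ : Indep m₂ m₃ μ) : Indep (m₁ ⊔ m₂) m₃ μ := by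
  set p := Set.image2 (· ∩ ·) {s | MeasurableSet[m₁] s} {s | MeasurableSet[m₂] s}
  have hp : IsPiSystem p := by
    rintro _ ⟨s₁, hs₁, s₂, hs₂, rfl⟩ _ ⟨t₁, ht₁, t₂, ht₂, rfl⟩ -
    exact ⟨s₁ ∩ t₁, hs₁.inter ht₁, s₂ ∩ t₂, hs₂.inter ht₂, Set.inter_inter_inter_comm ..⟩
  have hgen : m₁ ⊔ m₂ = MeasurableSpace.generateFrom p := by
    refine le_antisymm (sup_le (fun s hs => ?_) (fun s hs => ?_))
      (MeasurableSpace.generateFrom_le ?_)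
    · exact MeasurableSpace.measurableSet_generateFrom
        ⟨s, hs, Set.univ, MeasurableSet.univ, Set.inter_univ s⟩
    · exact MeasurableSpace.measurableSet_generateFrom
        ⟨Set.univ, MeasurableSet.univ, s, hs, Set.univ_inter s⟩
    · rintro _ ⟨s₁, hs₁, s₂, hs₂, rfl⟩
      exact (le_sup_left (b := m₂) _ hs₁).inter (le_sup_right (a := m₁) _ hs₂)
  refine IndepSets.indep (sup_le h₁ h₂) h₃ hp MeasurableSpace.isPiSystem_measurableSet hgen
    MeasurableSpace.generateFrom_measurableSet.symm ((IndepSets_iff _ _ _).2 ?_)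
  rintro _ t ⟨s₁, hs₁, s₂, hs₂, rfl⟩ (ht : MeasurableSet[m₃] t)
  have h₂₃' := (Indep_iff _ _ _).1 h₂₃
  have h₁₂₃' := (Indep_iff _ _ _).1 h₁₂₃
  calc μ (s₁ ∩ s₂ ∩ t) = μ s₁ * (μ s₂ * μ t) := by
        rw [Set.inter_assoc, h₁₂₃' _ _ hs₁ ((le_sup_left (b := m₃) _ hs₂).inter
          (le_sup_right (a := m₂) _ ht)), h₂₃' _ _ hs₂ ht]
    _ = μ (s₁ ∩ s₂) * μ t := by
        rw [h₁₂₃' _ _ hs₁ (le_sup_left (b := m₃) _ hs₂), mul_assoc]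

theorem iIndepFun.indepFun_prodMk_of_indepFun [IsZeroOrProbabilityMeasure μ]
    {ι α γ : Type*} [MeasurableSpace α] [MeasurableSpace γ] {X : Ω → α} {f : ι → Ω → γ}
    (hf_indep : iIndepFun f μ) (hXf : IndepFun X (fun ω i => f i ω) μ) (hX : Measurable X)
    (hf : ∀ i, Measurable (f i)) {S T : Finset ι} (hST : Disjoint S T) :
    IndepFun (fun ω => (X ω, fun i : S => f i ω)) (fun ω (i : T) => f i ω) μ := by
  have hle : ∀ S : Finset ι, MeasurableSpace.comap (fun ω (i : S) => f i ω) MeasurableSpace.pi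
      ≤ MeasurableSpace.comap (fun ω i => f i ω) MeasurableSpace.pi := fun S => by
    rw [show (fun ω (i : S) => f i ω) = S.restrict ∘ fun ω i => f i ω from rfl,
      ← MeasurableSpace.comap_comp]
    exact MeasurableSpace.comap_mono (Finset.measurable_restrict S).comap_le
  have hmeas : ∀ S : Finset ι, Measurable fun ω (i : S) => f i ω :=
    fun S => measurable_pi_lambda _ fun i => hf i
  rw [IndepFun_iff_Indep, Prod.instMeasurableSpace, MeasurableSpace.comap_prodMk]
  exact indep_sup_left_of_indep_sup_right hX.comap_le (hmeas S).comap_le (hmeas T).comap_le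
    (indep_of_indep_of_le_right hXf (sup_le (hle S) (hle T)))
    (hf_indep.indepFun_finset S T hST hf)

theorem IndepFun.cond_inter_preimage_le_cond [IsFiniteMeasure μ] {α γ : Type*}
    [MeasurableSpace α] [MeasurableSpace γ] {X : Ω → α} {Y : Ω → γ} (h : IndepFun X Y μ)
    (hX : Measurable X) (hY : Measurable Y) {u g : Set α} {v : Set γ} {B : Set Ω}
    (hu : MeasurableSet u) (hg : MeasurableSet g) (hv : MeasurableSet v)
    (hBg : X ⁻¹' u ∩ Y ⁻¹' v ∩ B ⊆ X ⁻¹' g) :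
    μ[B | X ⁻¹' u ∩ Y ⁻¹' v] ≤ μ[X ⁻¹' g | X ⁻¹' u] := by
  have hμ : ∀ s, MeasurableSet s → μ (X ⁻¹' s ∩ Y ⁻¹' v) = μ (X ⁻¹' s) * μ (Y ⁻¹' v) :=
    fun s hs => h.meas_inter (hs.preimage (comap_measurable X)) (hv.preimage (comap_measurable Y))
  by_cases h0 : μ (X ⁻¹' u ∩ Y ⁻¹' v) = 0
  · simp [cond_eq_zero_of_meas_eq_zero h0]
  have hv0 : μ (Y ⁻¹' v) ≠ 0 := fun hv0 => h0 (by rw [hμ u hu, hv0, mul_zero])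
  rw [cond_apply ((hX hu).inter (hY hv)), cond_apply (hX hu), ← ENNReal.div_eq_inv_mul,
    ← ENNReal.div_eq_inv_mul]
  calc μ (X ⁻¹' u ∩ Y ⁻¹' v ∩ B) / μ (X ⁻¹' u ∩ Y ⁻¹' v)
      ≤ μ (X ⁻¹' (u ∩ g) ∩ Y ⁻¹' v) / μ (X ⁻¹' u ∩ Y ⁻¹' v) := by
        gcongr 1
        exact measure_mono fun x hx => ⟨⟨hx.1.1, hBg hx⟩, hx.1.2⟩
    _ = μ (X ⁻¹' (u ∩ g)) * μ (Y ⁻¹' v) / (μ (X ⁻¹' u) * μ (Y ⁻¹' v)) := by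
        rw [hμ _ (hu.inter hg), hμ u hu]
    _ = μ (X ⁻¹' u ∩ X ⁻¹' g) / μ (X ⁻¹' u) :=
        ENNReal.mul_div_mul_right _ _ hv0 (measure_ne_top μ _)

theorem IndepFun.cond_add_cond_le_one [IsFiniteMeasure μ] {α γ : Type*}
    [MeasurableSpace α] [MeasurableSpace γ] {X : Ω → α} {Y : Ω → γ} (h : IndepFun X Y μ)
    (hX : Measurable X) (hY : Measurable Y) {u g : Set α} {v v' : Set γ} {B B' : Set Ω}
    (hu : MeasurableSet u) (hv : MeasurableSet v) (hv' : MeasurableSet v') (hg : MeasurableSet g)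
    (hBg : X ⁻¹' u ∩ Y ⁻¹' v ∩ B ⊆ X ⁻¹' g) (hB'g : X ⁻¹' u ∩ Y ⁻¹' v' ∩ B' ⊆ X ⁻¹' gᶜ) :
    μ[B | X ⁻¹' u ∩ Y ⁻¹' v] + μ[B' | X ⁻¹' u ∩ Y ⁻¹' v'] ≤ 1 :=
  calc μ[B | X ⁻¹' u ∩ Y ⁻¹' v] + μ[B' | X ⁻¹' u ∩ Y ⁻¹' v']
      ≤ μ[X ⁻¹' g | X ⁻¹' u] + μ[X ⁻¹' gᶜ | X ⁻¹' u] :=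
        add_le_add (h.cond_inter_preimage_le_cond hX hY hu hg hv hBg)
          (h.cond_inter_preimage_le_cond hX hY hu hg.compl hv' hB'g)
    _ = μ[Set.univ | X ⁻¹' u] := by rw [Set.preimage_compl, measure_add_measure_compl (hX hg)]
    _ ≤ 1 := prob_le_one

end ProbabilityTheory

theorem Finset.sum_mul_le_sum_mul_of_sign_pattern {κ : Type*} {E : Finset κ} {w u d : κ → ℝ}
    (hpos : ∀ e ∈ E, 0 < w e → u e ≤ d e) (hneg : ∀ e ∈ E, w e < 0 → d e ≤ u e) :
    ∑ e ∈ E, w e * u e ≤ ∑ e ∈ E, w e * d e := by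
  refine Finset.sum_le_sum fun e he => ?_
  rcases lt_trichotomy (w e) 0 with hw | hw | hw
  · exact mul_le_mul_of_nonpos_left (hneg e he hw) hw.le
  · simp [hw]
  · exact mul_le_mul_of_nonneg_left (hpos e he hw) hw.le

theorem Finset.sum_mul_sym2_lift_add {ι : Type*} [Fintype ι] [DecidableEq ι]
    {E : Finset (Sym2 ι)} (hE : ∀ e ∈ E, ¬ e.IsDiag) (w : Sym2 ι → ℝ) (x : ι → ℝ) :
    ∑ e ∈ E, w e * Sym2.lift ⟨fun a b => x a + x b, fun _ _ => add_comm _ _⟩ e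
      = ∑ i, (∑ e ∈ E.filter (i ∈ ·), w e) * x i := by
  have hedge : ∀ e ∈ E, w e * Sym2.lift ⟨fun a b => x a + x b, fun _ _ => add_comm _ _⟩ e
      = ∑ i, if i ∈ e then w e * x i else 0 := by
    intro e he
    induction e using Sym2.ind with
    | _ a b =>
      have hab : a ≠ b := fun h => hE _ he (Sym2.mk_isDiag_iff.mpr h)
      rw [← Finset.sum_filter, show Finset.univ.filter (· ∈ s(a, b)) = {a, b} by ext; simp,
        Finset.sum_pair hab, Sym2.lift_mk, mul_add]
  rw [Finset.sum_congr rfl hedge, Finset.sum_comm]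
  simp_rw [Finset.sum_mul, ← Finset.sum_filter]

theorem Finset.setOf_forall_eq_inter_compl {ι Ω β : Type*} [Fintype ι] [DecidableEq ι]
    (S : Finset ι) (Z : ι → Ω → β) {y z : ι → β} (h : ∀ i ∈ S, z i = y i) :
    {x | ∀ i, Z i x = y i} = {x | ∀ i : S, Z i x = z i} ∩ {x | ∀ i : ↥Sᶜ, Z i x = y i} := by
  ext x
  simp only [Set.mem_ofPred_eq, Set.mem_inter_iff, Subtype.forall, Finset.mem_compl]
  refine ⟨fun hx => ⟨fun i hi => (hx i).trans (h i hi).symm, fun i _ => hx i⟩,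
    fun ⟨hS, hSc⟩ i => ?_⟩
  by_cases hi : i ∈ S
  exacts [(hS i hi).trans (h i hi), hSc i hi]

/-- Aggregated identified-set restriction (Theorem): for any weighted link
configuration, any `c`, and any two positive-probability values `z, z'` of the
agent characteristics that agree on the retained agents `{i : σ_i ≠ 0}`, the
conditional probability of the positive pattern with `{Σ ω_e δ_e ≤ c}` given
`{Z = z}` plus that of the flipped pattern with `{Σ ω_e δ_e > c}` given
`{Z = z'}` is at most one. -/
theorem weighted_cycle_aggregation_bound
    {Ω : Type*} [MeasurableSpace Ω] (P : Measure Ω) [IsProbabilityMeasure P]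
    {ι : Type*} [Fintype ι] [DecidableEq ι]
    {β : Type*} [MeasurableSpace β] [MeasurableSingletonClass β]
    (Z : ι → Ω → β) (A : ι → Ω → ℝ)
    (hZ : ∀ i, Measurable (Z i)) (hA : ∀ i, Measurable (A i))
    (hindep_pairs : iIndepFun
      (fun i => fun ω0 => (Z i ω0, A i ω0)) P)
    (E : Finset (Sym2 ι)) (hE : ∀ e ∈ E, ¬ e.IsDiag)
    (ω : Sym2 ι → ℝ)
    (ε : Sym2 ι → Ω → ℝ) (hε : ∀ e, Measurable (ε e))
    (hindep_shocks : IndepFun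
      (fun ω0 => fun e : {e // e ∈ E} => ε e.1 ω0)
      (fun ω0 => fun i : ι => (Z i ω0, A i ω0)) P)
    (δ : Sym2 ι → Ω → ℝ)
    (Y : Sym2 ι → Ω → ℝ)
    (hY : Y = fun e ω0 =>
      if Sym2.lift ⟨fun a b => A a ω0 + A b ω0, fun a b => by ring⟩ e + ε e ω0
          ≤ δ e ω0 then (1 : ℝ) else 0)
    (σ : ι → ℝ)
    (hσ : σ = fun i => ∑ e ∈ E.filter (fun e => i ∈ e), ω e)
    (c : ℝ) (z z' : ι → β)
    (hagree : ∀ i, σ i ≠ 0 → z i = z' i) :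
    P[{ω0 | (∀ e ∈ E, 0 < ω e → Y e ω0 = 1) ∧ (∀ e ∈ E, ω e < 0 → Y e ω0 = 0) ∧
          (∑ e ∈ E, ω e * δ e ω0) ≤ c} | {ω0 | ∀ i, Z i ω0 = z i}]
      + P[{ω0 | (∀ e ∈ E, 0 < ω e → Y e ω0 = 0) ∧ (∀ e ∈ E, ω e < 0 → Y e ω0 = 1) ∧
          c < (∑ e ∈ E, ω e * δ e ω0)} | {ω0 | ∀ i, Z i ω0 = z' i}]
      ≤ 1 := by
  set R := Finset.univ.filter (σ · ≠ 0)
  set X : Ω → (E → ℝ) × (R → β × ℝ) := fun x => (fun e => ε e x, fun i => (Z i x, A i x))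
  set W : Ω → (↥Rᶜ → β × ℝ) := fun x i => (Z i x, A i x)
  set F : (E → ℝ) × (R → β × ℝ) → ℝ :=
    fun p => ∑ e : E, ω e * p.1 e + ∑ i : R, σ i * (p.2 i).2
  have hXW : IndepFun X W P := hindep_pairs.indepFun_prodMk_of_indepFun hindep_shocks
    (by fun_prop) (fun i => (hZ i).prodMk (hA i)) disjoint_compl_right
  have hFX : ∀ x, F (X x) = ∑ e ∈ E,
      ω e * (Sym2.lift ⟨fun a b => A a x + A b x, fun _ _ => add_comm _ _⟩ e + ε e x) := by
    intro x
    rw [show F (X x) = ∑ e ∈ E, ω e * ε e x + ∑ i ∈ R, σ i * A i x from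
        congrArg₂ (· + ·) (Finset.sum_coe_sort E fun e => ω e * ε e x)
          (Finset.sum_coe_sort R fun i => σ i * A i x),
      Finset.sum_filter_of_ne fun i _ h => left_ne_zero_of_mul h,
      Finset.sum_congr rfl fun e _ => mul_add _ _ _, Finset.sum_add_distrib,
      Finset.sum_mul_sym2_lift_add hE, hσ, add_comm]
  rw [R.setOf_forall_eq_inter_compl Z fun _ _ => rfl,
    R.setOf_forall_eq_inter_compl Z fun i hi => hagree i (Finset.mem_filter.1 hi).2]
  refine hXW.cond_add_cond_le_one (u := {p | ∀ i : R, (p.2 i).1 = z i})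
    (v := {q | ∀ i : ↥Rᶜ, (q i).1 = z i}) (v' := {q | ∀ i : ↥Rᶜ, (q i).1 = z' i})
    (g := {p | F p ≤ c}) (by fun_prop) (by fun_prop) (by measurability) (by measurability)
    (by measurability) (measurableSet_le (by fun_prop) measurable_const)
    (fun x ⟨_, hup, hdown, hc⟩ => ?_) (fun x ⟨_, hup, hdown, hc⟩ => ?_)
  · show F (X x) ≤ c
    rw [hFX]
    refine (Finset.sum_mul_le_sum_mul_of_sign_pattern (fun e he hw => ?_)
      fun e he hw => ?_).trans hc
    · simpa [hY] using hup e he hw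
    · exact le_of_lt <| by simpa [hY] using hdown e he hw
  · show ¬ F (X x) ≤ c
    rw [hFX, not_le]
    refine hc.trans_le (Finset.sum_mul_le_sum_mul_of_sign_pattern (fun e he hw => ?_)
      fun e he hw => ?_)
    · exact le_of_lt <| by simpa [hY] using hup e he hw
    · simpa [hY] using hdown e he hw
end

section
/- Define the standard logistic CDF Λ(x) := 1/(1 + exp(−x)). For any real numbers A_i, A_j, A_h, A_k and δ_{ij}, δ_{hk}, δ_{ik}, δ_{jh}, setting d_{ab} := δ_{ab} − A_a − A_b for each of the four tetrad pairs, the following holds: Λ(d_{ij}) · Λ(d_{hk}) · (1 − Λ(d_{ik})) · (1 − Λ(d_{jh})) = exp(δ_{ij} + δ_{hk} − δ_{ik} − δ_{jh}) · (1 − Λ(d_{ij})) · (1 − Λ(d_{hk})) · Λ(d_{ik}) · Λ(d_{jh}). In particular, the fixed effects A_i, A_j, A_h, A_k cancel from the odds ratio, which depends only on the tetrad index difference δ_{ij} + δ_{hk} − δ_{ik} − δ_{jh}. -/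
/-! Since `Λ x / (1 - Λ x) = exp x`, each of the four logistic factors trades for an exponential,
so the odds ratio is `exp (dij + dhk - dik - djh)`; in that combination every fixed effect
appears once with each sign. -/

open Real

theorem Real.sigmoid_eq_exp_mul_one_sub_sigmoid (x : ℝ) :
    sigmoid x = exp x * (1 - sigmoid x) := by
  rw [← sigmoid_neg, ← sigmoid_mul_rexp_neg, mul_comm, mul_assoc, ← exp_add, neg_add_cancel,
    exp_zero, mul_one]

theorem tetrad_odds_eq_exp_of_odds_eq_exp {F : ℝ → ℝ} (hF : ∀ x, F x = exp x * (1 - F x))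
    (a b c d : ℝ) :
    F a * F b * (1 - F c) * (1 - F d)
      = exp (a + b - c - d) * ((1 - F a) * (1 - F b) * F c * F d) := by
  have hexp : exp (a + b - c - d) * exp c * exp d = exp a * exp b := by
    rw [← exp_add, ← exp_add, ← exp_add]; congr 1; ring
  calc F a * F b * (1 - F c) * (1 - F d)
      = exp a * exp b * ((1 - F a) * (1 - F b) * (1 - F c) * (1 - F d)) := by
        nth_rw 1 [hF a, hF b]; ring
    _ = exp (a + b - c - d)
          * ((1 - F a) * (1 - F b) * (exp c * (1 - F c)) * (exp d * (1 - F d))) := by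
        rw [← hexp]; ring
    _ = exp (a + b - c - d) * ((1 - F a) * (1 - F b) * F c * F d) := by rw [← hF c, ← hF d]

/-- Algebraic core of the point-identification theorem: under the standard
logistic CDF `Λ(x) = 1/(1 + exp(−x))`, the odds of the tetrad link pattern
relative to the flipped pattern equal `exp` of the tetrad-differenced index,
with all individual fixed effects cancelling. -/
theorem logistic_tetrad_odds_identity
    (Λ : ℝ → ℝ) (hΛ : Λ = fun x => 1 / (1 + Real.exp (-x)))
    (Ai Aj Ah Ak δij δhk δik δjh : ℝ)
    (dij dhk dik djh : ℝ)
    (hdij : dij = δij - Ai - Aj) (hdhk : dhk = δhk - Ah - Ak)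
    (hdik : dik = δik - Ai - Ak) (hdjh : djh = δjh - Aj - Ah) :
    Λ dij * Λ dhk * (1 - Λ dik) * (1 - Λ djh)
      = Real.exp (δij + δhk - δik - δjh)
        * ((1 - Λ dij) * (1 - Λ dhk) * Λ dik * Λ djh) := by
  have hΛ_sigmoid : Λ = sigmoid := by
    rw [hΛ]; funext x; rw [one_div, sigmoid_def]
  have fixed_effects_cancel : dij + dhk - dik - djh = δij + δhk - δik - δjh := by
    rw [hdij, hdhk, hdik, hdjh]; ring
  rw [hΛ_sigmoid, ← fixed_effects_cancel]
  exact tetrad_odds_eq_exp_of_odds_eq_exp sigmoid_eq_exp_mul_one_sub_sigmoid dij dhk dik djh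
end

section
/- Let V be a finite set and Y : V × V → {0, 1} a symmetric function with Y(a,a) = 0 for all a ∈ V. Let i, j, h, k ∈ V be distinct and suppose Y(i,h) = 0 and Y(j,k) = 0. Then for each of the four tetrad pairs (a,b) ∈ {(i,j), (h,k), (i,k), (j,h)}, the common-friends count satisfies Σ_{l ∈ V, l ≠ a, l ≠ b} Y(a,l) · Y(b,l) = Σ_{l ∈ V \ {i,j,h,k}} Y(a,l) · Y(b,l); that is, every within-quadruplet contribution to the common-friends count of a tetrad link vanishes, so the count depends only on links to agents outside the quadruplet and in particular is invariant to the values of Y on the four tetrad links (i,j), (h,k), (i,k), (j,h). -/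
/-!
The quadruplet `{i, j, h, k}` is the union of the two diagonals `{i, h}` and `{j, k}`, each of
which carries no link (the diagonal link is absent and `Y` vanishes on the diagonal). Every tetrad
pair has one endpoint on each diagonal, so for every agent `l` of the quadruplet one of the two
endpoints is not linked to `l`, and `l` contributes nothing to the common-friends count.
-/

open Finset

section IndependentSets

variable {V R : Type*} [DecidableEq V] [Zero R] (Y : V → V → R)

def IsIndependent (s : Finset V) : Prop :=
  ∀ x ∈ s, ∀ y ∈ s, Y x y = 0

theorem isIndependent_pair (hsymm : ∀ a b, Y a b = Y b a) (hdiag : ∀ a, Y a a = 0) {x y : V}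
    (hxy : Y x y = 0) : IsIndependent Y {x, y} := by
  have hyx : Y y x = 0 := hsymm y x ▸ hxy
  simp only [IsIndependent, mem_insert, mem_singleton]
  rintro u (rfl | rfl) v (rfl | rfl) <;> simp only [hdiag, hxy, hyx]

theorem IsIndependent.eq_zero_or_eq_zero_of_mem_union {S T : Finset V} (hS : IsIndependent Y S)
    (hT : IsIndependent Y T) {a b : V} (hab : a ∈ S ∧ b ∈ T ∨ a ∈ T ∧ b ∈ S) :
    ∀ l ∈ S ∪ T, Y a l = 0 ∨ Y b l = 0 := by
  intro l hl
  rcases hab with ⟨ha, hb⟩ | ⟨ha, hb⟩ <;> rcases mem_union.mp hl with hlS | hlT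
  exacts [Or.inl (hS a ha l hlS), Or.inr (hT b hb l hlT), Or.inr (hS b hb l hlS),
    Or.inl (hT a ha l hlT)]

end IndependentSets

section CommonFriends

variable {V R : Type*} [Fintype V] [DecidableEq V] [NonUnitalNonAssocSemiring R]
  (Y : V → V → R)

theorem sum_filter_ne_ne_mul_eq_sum_mul (hdiag : ∀ a, Y a a = 0) (a b : V) :
    ∑ l ∈ univ.filter (fun l => l ≠ a ∧ l ≠ b), Y a l * Y b l = ∑ l, Y a l * Y b l := by
  refine sum_filter_of_ne fun l _ hl => ⟨?_, ?_⟩ <;> rintro rfl <;> simp [hdiag] at hl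

theorem sum_filter_not_mem_mul_eq_sum_mul {s : Finset V} {a b : V}
    (hs : ∀ l ∈ s, Y a l = 0 ∨ Y b l = 0) :
    ∑ l ∈ univ.filter (fun l => l ∉ s), Y a l * Y b l = ∑ l, Y a l * Y b l := by
  refine sum_filter_of_ne fun l _ hl hls => hl ?_
  rcases hs l hls with ha | hb
  · rw [ha, zero_mul]
  · rw [hb, mul_zero]

end CommonFriends

theorem common_friends_comparison_pattern_invariance_general
    {V : Type*} [Fintype V] [DecidableEq V]
    (Y : V → V → ℕ)
    (hsymm : ∀ a b, Y a b = Y b a)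
    (hdiag : ∀ a, Y a a = 0)
    (i j h k : V)
    (hYih : Y i h = 0) (hYjk : Y j k = 0) :
    ∀ a b : V,
      ((a, b) = (i, j) ∨ (a, b) = (h, k) ∨ (a, b) = (i, k) ∨ (a, b) = (j, h)) →
      ∑ l ∈ Finset.univ.filter (fun l => l ≠ a ∧ l ≠ b), Y a l * Y b l
        = ∑ l ∈ Finset.univ.filter (fun l => l ∉ ({i, j, h, k} : Finset V)),
            Y a l * Y b l := by
  intro a b hab
  have hS := isIndependent_pair Y hsymm hdiag hYih
  have hT := isIndependent_pair Y hsymm hdiag hYjk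
  have hquad : ({i, j, h, k} : Finset V) = {i, h} ∪ {j, k} := by
    ext; simp only [mem_insert, mem_singleton, mem_union]; tauto
  have hvanish : ∀ l ∈ ({i, j, h, k} : Finset V), Y a l = 0 ∨ Y b l = 0 := by
    rw [hquad]
    simp only [Prod.mk.injEq] at hab
    rcases hab with ⟨rfl, rfl⟩ | ⟨rfl, rfl⟩ | ⟨rfl, rfl⟩ | ⟨rfl, rfl⟩
    all_goals exact hS.eq_zero_or_eq_zero_of_mem_union Y hT (by simp)
  rw [sum_filter_ne_ne_mul_eq_sum_mul Y hdiag, sum_filter_not_mem_mul_eq_sum_mul Y hvanish]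

/-- Comparison-pattern invariance of the common-friends count on admissible
tetrads: if the diagonal links are absent (`Y(i,h) = 0`, `Y(j,k) = 0`), then
for each of the four tetrad pairs `(a,b)` the common-friends count
`Σ_{l ≠ a,b} Y(a,l)·Y(b,l)` equals the sum over agents outside the
quadruplet `{i,j,h,k}` only. -/
theorem common_friends_comparison_pattern_invariance
    {V : Type*} [Fintype V] [DecidableEq V]
    (Y : V → V → ℕ)
    (hY01 : ∀ a b, Y a b = 0 ∨ Y a b = 1)
    (hsymm : ∀ a b, Y a b = Y b a)
    (hdiag : ∀ a, Y a a = 0)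
    (i j h k : V)
    (hij : i ≠ j) (hih : i ≠ h) (hik : i ≠ k)
    (hjh : j ≠ h) (hjk : j ≠ k) (hhk : h ≠ k)
    (hYih : Y i h = 0) (hYjk : Y j k = 0) :
    ∀ a b : V,
      ((a, b) = (i, j) ∨ (a, b) = (h, k) ∨ (a, b) = (i, k) ∨ (a, b) = (j, h)) →
      ∑ l ∈ Finset.univ.filter (fun l => l ≠ a ∧ l ≠ b), Y a l * Y b l
        = ∑ l ∈ Finset.univ.filter (fun l => l ∉ ({i, j, h, k} : Finset V)),
            Y a l * Y b l :=
  common_friends_comparison_pattern_invariance_general Y hsymm hdiag i j h k hYih hYjk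
end
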